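/- arXiv:math/0409266 — 10 statements merged into one kernel-verified Lean document; each statement's English description precedes it below -/
import Mathlib

section
/- Let ℓ ≥ 1, Λ ⊆ {1,…,ℓ}, and let S^Λ_ℓ denote the set of permutations σ ∈ S_ℓ such that for all j < j' in Λ, σ(j) < σ(j'). Given positive rationals (or positive integers) i_1,…,i_ℓ, the following identity holds: Σ_{σ ∈ S^Λ_ℓ} ∏_{j=1}^{ℓ} 1/(Σ_{m=1}^{j} i_{σ^{-1}(m)}) = 1 / ∏_{j=1}^{ℓ} (i_j + Σ_{m < j, m ∈ Λ, j ∈ Λ} i_m). -/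
open scoped Classical

/-!
Read an admissible ordering from its last position backwards. The element `a` placed last is
either outside `Λ` or the largest element of `Λ`; removing it leaves an admissible ordering of
the other elements, and the product acquires the common factor `1 / Σ i`. By induction on the
set being ordered, the orderings ending in `a` contribute `w_a / (Σ i · ∏ w)`, where `w_j` is the
`j`-th factor on the right-hand side: the weights of the smaller set agree with those of the
larger one because `a` lies above every element of `Λ`. Finally, summing `w_a` over the admissible
last elements gives `Σ_{j ∉ Λ} i_j + Σ_{j ∈ Λ} i_j = Σ i`.
-/

namespace PermSumIdentity

variable {α K : Type*}

/-- A list `l = [σ⁻¹ ℓ, …, σ⁻¹ 1]` encodes an ordering read backwards, so that the suffix sums of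
`l` are the prefix sums `Σ_{m ≤ j} i_{σ⁻¹ m}` and the last position is peeled off by `cons`. -/
def prodInvSuffixSums [Field K] (i : α → K) : List α → K
  | [] => 1
  | a :: t => ((a :: t).map i).sum⁻¹ * prodInvSuffixSums i t

def listings (s : Finset α) : Finset (List α) :=
  ⟨s.val.lists, Multiset.lists_nodup_finset s⟩

theorem mem_listings {s : Finset α} {l : List α} : l ∈ listings s ↔ s.val = l :=
  Multiset.mem_lists_iff _ _

theorem nil_mem_listings_iff {s : Finset α} : [] ∈ listings s ↔ s = ∅ := by
  rw [mem_listings, ← Finset.val_eq_zero]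
  rfl

theorem cons_mem_listings_iff [DecidableEq α] {s : Finset α} {a : α} {t : List α} :
    a :: t ∈ listings s ↔ a ∈ s ∧ t ∈ listings (s.erase a) := by
  simp only [mem_listings, Finset.erase_val]
  constructor
  · intro h
    have ha : a ∈ s := by simp [← Finset.mem_val, h]
    exact ⟨ha, by rw [h, ← Multiset.cons_coe, Multiset.erase_cons_head]⟩
  · rintro ⟨ha, ht⟩
    rw [← Multiset.cons_coe, ← ht, Multiset.cons_erase (Finset.mem_val.mpr ha)]

theorem sum_map_of_mem_listings [AddCommMonoid K] {s : Finset α} {l : List α}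
    (hl : l ∈ listings s) (i : α → K) : (l.map i).sum = ∑ x ∈ s, i x := by
  rw [Finset.sum_eq_multiset_sum, mem_listings.1 hl, Multiset.map_coe, Multiset.sum_coe]

theorem mem_of_mem_listings {s : Finset α} {l : List α} (hl : l ∈ listings s) {b : α} :
    b ∈ l ↔ b ∈ s := by
  rw [← Finset.mem_val, mem_listings.1 hl, Multiset.mem_coe]

theorem prodInvSuffixSums_cons_of_mem_listings [Field K] (i : α → K) {s : Finset α} {a : α}
    {t : List α} (h : a :: t ∈ listings s) :
    prodInvSuffixSums i (a :: t) = (∑ x ∈ s, i x)⁻¹ * prodInvSuffixSums i t := by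
  rw [prodInvSuffixSums, sum_map_of_mem_listings h]

theorem mem_listings_univ_iff [Fintype α] {l : List α} :
    l ∈ listings Finset.univ ↔ l.Nodup ∧ ∀ x, x ∈ l := by
  constructor
  · intro hl
    refine ⟨?_, fun x => (mem_of_mem_listings hl).2 (Finset.mem_univ x)⟩
    rw [← Multiset.coe_nodup, ← mem_listings.1 hl]
    exact Finset.univ.nodup
  · rintro ⟨hnd, hmem⟩
    rw [mem_listings, Multiset.Nodup.ext Finset.univ.nodup (Multiset.coe_nodup.2 hnd)]
    simp [hmem]

theorem prodInvSuffixSums_ofFn [Field K] (i : α → K) {n : ℕ} (f : Fin n → α) :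
    prodInvSuffixSums i (List.ofFn f) = ∏ k, (∑ m with k ≤ m, i (f m))⁻¹ := by
  induction n with
  | zero => simp [prodInvSuffixSums]
  | succ n ih =>
    have hsucc : ∀ k : Fin n, ∑ m with k.succ ≤ m, i (f m) = ∑ m with k ≤ m, i (f m.succ) := by
      intro k
      simp [Finset.sum_filter, Fin.sum_univ_succ, Fin.succ_le_succ_iff]
    rw [List.ofFn_succ, prodInvSuffixSums, ← List.ofFn_succ, ih, Fin.prod_univ_succ,
      List.map_ofFn, List.sum_ofFn]
    simp only [Fin.zero_le, Finset.filter_true, hsucc, Function.comp_apply]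

theorem prodInvSuffixSums_ofFn_rev [Field K] (i : α → K) {n : ℕ} (g : Fin n → α) :
    prodInvSuffixSums i (List.ofFn (g ∘ Fin.rev)) = ∏ j, (∑ m with m ≤ j, i (g m))⁻¹ := by
  rw [prodInvSuffixSums_ofFn, ← Equiv.prod_comp Fin.revPerm]
  refine Finset.prod_congr rfl fun j _ => ?_
  rw [Finset.sum_filter, Finset.sum_filter, ← Equiv.sum_comp Fin.revPerm]
  simp [Fin.rev_le_rev]

variable [LinearOrder α]

def decreasingOnListings (Λ s : Finset α) : Finset (List α) :=
  (listings s).filter (List.Pairwise fun a b => a ∈ Λ → b ∈ Λ → b < a)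

theorem decreasingOnListings_empty (Λ : Finset α) : decreasingOnListings Λ ∅ = {[]} := by
  ext (_ | ⟨a, t⟩) <;>
    simp [decreasingOnListings, nil_mem_listings_iff, cons_mem_listings_iff]

theorem cons_mem_decreasingOnListings_iff {Λ s : Finset α} {a : α} {t : List α} :
    a :: t ∈ decreasingOnListings Λ s ↔
      a ∈ s ∧ (a ∈ Λ → ∀ b ∈ Λ ∩ s, b ≤ a) ∧ t ∈ decreasingOnListings Λ (s.erase a) := by
  simp only [decreasingOnListings, Finset.mem_filter, cons_mem_listings_iff, List.pairwise_cons]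
  constructor
  · rintro ⟨⟨ha, ht⟩, hhead, hpair⟩
    refine ⟨ha, fun haΛ b hb => ?_, ht, hpair⟩
    obtain ⟨hbΛ, hbs⟩ := Finset.mem_inter.1 hb
    rcases eq_or_ne b a with rfl | hba
    · exact le_rfl
    · exact (hhead b ((mem_of_mem_listings ht).2 (Finset.mem_erase.2 ⟨hba, hbs⟩)) haΛ hbΛ).le
  · rintro ⟨ha, htop, ht, hpair⟩
    refine ⟨⟨ha, ht⟩, fun b hb haΛ hbΛ => ?_, hpair⟩
    obtain ⟨hba, hbs⟩ := Finset.mem_erase.1 ((mem_of_mem_listings ht).1 hb)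
    exact (htop haΛ b (Finset.mem_inter.2 ⟨hbΛ, hbs⟩)).lt_of_ne hba

theorem sum_decreasingOnListings_eq_sum_cons [AddCommMonoid K] (Λ : Finset α) {s : Finset α}
    (hs : s.Nonempty) (f : List α → K) :
    ∑ l ∈ decreasingOnListings Λ s, f l =
      ∑ a ∈ s with a ∈ Λ → ∀ b ∈ Λ ∩ s, b ≤ a,
        ∑ t ∈ decreasingOnListings Λ (s.erase a), f (a :: t) := by
  rw [Finset.sum_sigma']
  refine (Finset.sum_bij (fun p _ => p.1 :: p.2) ?_ ?_ ?_ fun _ _ => rfl).symm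
  · rintro ⟨a, t⟩ hp
    obtain ⟨ha, ht⟩ := Finset.mem_sigma.1 hp
    obtain ⟨has, htop⟩ := Finset.mem_filter.1 ha
    exact cons_mem_decreasingOnListings_iff.2 ⟨has, htop, ht⟩
  · rintro ⟨a, t⟩ _ ⟨b, u⟩ _ h
    obtain ⟨rfl, rfl⟩ := List.cons_eq_cons.1 h
    rfl
  · rintro (_ | ⟨a, t⟩) hl
    · exact absurd (nil_mem_listings_iff.1 (Finset.mem_filter.1 hl).1) hs.ne_empty
    · obtain ⟨has, htop, ht⟩ := cons_mem_decreasingOnListings_iff.1 hl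
      exact ⟨⟨a, t⟩, Finset.mem_sigma.2 ⟨Finset.mem_filter.2 ⟨has, htop⟩, ht⟩, rfl⟩

theorem sum_filter_upperBound_add_sum_lt [AddCommMonoid K] (t : Finset α) (f : α → K) :
    ∑ a ∈ t with ∀ b ∈ t, b ≤ a, (f a + ∑ m ∈ t with m < a, f m) = ∑ a ∈ t, f a := by
  rcases t.eq_empty_or_nonempty with rfl | ht
  · simp
  have htop : t.filter (fun a => ∀ b ∈ t, b ≤ a) = {t.max' ht} := by
    ext a
    simp only [Finset.mem_filter, Finset.mem_singleton]
    constructor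
    · rintro ⟨ha, hle⟩
      exact le_antisymm (t.le_max' a ha) (t.max'_le ht a hle)
    · rintro rfl
      exact ⟨t.max'_mem ht, t.le_max'⟩
  have hbelow : t.filter (· < t.max' ht) = t.erase (t.max' ht) := by
    ext m
    simp only [Finset.mem_filter, Finset.mem_erase]
    constructor
    · rintro ⟨hm, hlt⟩
      exact ⟨hlt.ne, hm⟩
    · rintro ⟨hne, hm⟩
      exact ⟨hm, (t.le_max' m hm).lt_of_ne hne⟩
  rw [htop, Finset.sum_singleton, hbelow, Finset.add_sum_erase _ _ (t.max'_mem ht)]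

def chainWeight [AddCommMonoid K] (Λ s : Finset α) (i : α → K) (j : α) : K :=
  i j + if j ∈ Λ then ∑ m ∈ (Λ ∩ s).filter (· < j), i m else 0

theorem sum_filter_chainWeight [AddCommMonoid K] (Λ s : Finset α) (i : α → K) :
    ∑ a ∈ s with a ∈ Λ → ∀ b ∈ Λ ∩ s, b ≤ a, chainWeight Λ s i a = ∑ a ∈ s, i a := by
  rw [← Finset.sum_filter_add_sum_filter_not _ (· ∈ Λ), Finset.filter_filter,
    Finset.filter_filter]
  have hin : s.filter (fun a => (a ∈ Λ → ∀ b ∈ Λ ∩ s, b ≤ a) ∧ a ∈ Λ) =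
      (Λ ∩ s).filter (fun a => ∀ b ∈ Λ ∩ s, b ≤ a) := by
    ext a
    simp only [Finset.mem_filter, Finset.mem_inter]
    tauto
  have hout : s.filter (fun a => (a ∈ Λ → ∀ b ∈ Λ ∩ s, b ≤ a) ∧ a ∉ Λ) =
      s.filter (· ∉ Λ) := by
    ext a
    simp only [Finset.mem_filter]
    tauto
  have hweight_in : ∀ a ∈ (Λ ∩ s).filter (fun a => ∀ b ∈ Λ ∩ s, b ≤ a),
      chainWeight Λ s i a = i a + ∑ m ∈ Λ ∩ s with m < a, i m := fun a ha => by
    simp [chainWeight, (Finset.mem_inter.1 (Finset.mem_filter.1 ha).1).1]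
  have hweight_out : ∀ a ∈ s.filter (· ∉ Λ), chainWeight Λ s i a = i a := fun a ha => by
    simp [chainWeight, (Finset.mem_filter.1 ha).2]
  rw [hin, hout, Finset.sum_congr rfl hweight_in, Finset.sum_congr rfl hweight_out,
    sum_filter_upperBound_add_sum_lt, Finset.inter_comm, ← Finset.filter_mem_eq_inter,
    Finset.sum_filter_add_sum_filter_not]

theorem chainWeight_erase [AddCommMonoid K] {Λ s : Finset α} (i : α → K) {a j : α}
    (htop : a ∈ Λ → ∀ b ∈ Λ ∩ s, b ≤ a) (hj : j ∈ s.erase a) :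
    chainWeight Λ (s.erase a) i j = chainWeight Λ s i j := by
  unfold chainWeight
  split_ifs with hjΛ
  · have ha : a ∉ (Λ ∩ s).filter (· < j) := fun ha => by
      obtain ⟨haΛs, haj⟩ := Finset.mem_filter.1 ha
      have hjs := Finset.mem_of_mem_erase hj
      exact (htop (Finset.mem_inter.1 haΛs).1 j (Finset.mem_inter.2 ⟨hjΛ, hjs⟩)).not_gt haj
    rw [Finset.inter_erase, Finset.filter_erase, Finset.erase_eq_of_notMem ha]
  · rfl

theorem chainWeight_pos [Field K] [LinearOrder K] [IsStrictOrderedRing K] (Λ s : Finset α)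
    {i : α → K} (hi : ∀ j, 0 < i j) (j : α) : 0 < chainWeight Λ s i j := by
  refine add_pos_of_pos_of_nonneg (hi j) ?_
  split_ifs
  · exact Finset.sum_nonneg fun m _ => (hi m).le
  · exact le_rfl

theorem sum_prodInvSuffixSums_decreasingOnListings [Field K] [LinearOrder K]
    [IsStrictOrderedRing K] (Λ : Finset α) {i : α → K} (hi : ∀ j, 0 < i j) (s : Finset α) :
    ∑ l ∈ decreasingOnListings Λ s, prodInvSuffixSums i l =
      (∏ j ∈ s, chainWeight Λ s i j)⁻¹ := by
  induction s using Finset.strongInduction with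
  | H s ih =>
  rcases s.eq_empty_or_nonempty with rfl | hs
  · simp [decreasingOnListings_empty, prodInvSuffixSums]
  set S := ∑ x ∈ s, i x
  set W := ∏ j ∈ s, chainWeight Λ s i j
  have hlast : ∀ a ∈ s.filter (fun a => a ∈ Λ → ∀ b ∈ Λ ∩ s, b ≤ a),
      ∑ t ∈ decreasingOnListings Λ (s.erase a), prodInvSuffixSums i (a :: t) =
        S⁻¹ * (chainWeight Λ s i a * W⁻¹) := by
    intro a ha
    obtain ⟨has, htop⟩ := Finset.mem_filter.1 ha
    have hcons : ∀ t ∈ decreasingOnListings Λ (s.erase a),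
        prodInvSuffixSums i (a :: t) = S⁻¹ * prodInvSuffixSums i t := fun t ht =>
      prodInvSuffixSums_cons_of_mem_listings i
        (Finset.mem_filter.1 (cons_mem_decreasingOnListings_iff.2 ⟨has, htop, ht⟩)).1
    have hW : W = chainWeight Λ s i a * ∏ j ∈ s.erase a, chainWeight Λ (s.erase a) i j := by
      rw [Finset.prod_congr rfl fun j hj => chainWeight_erase i htop hj,
        Finset.mul_prod_erase s _ has]
    rw [Finset.sum_congr rfl hcons, ← Finset.mul_sum, ih _ (Finset.erase_ssubset has), hW,
      mul_inv, mul_inv_cancel_left₀ (chainWeight_pos Λ s hi a).ne']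
  have hS : S ≠ 0 := (Finset.sum_pos (fun x _ => hi x) hs).ne'
  rw [sum_decreasingOnListings_eq_sum_cons Λ hs, Finset.sum_congr rfl hlast, ← Finset.mul_sum,
    ← Finset.sum_mul, sum_filter_chainWeight, ← mul_assoc, inv_mul_cancel₀ hS, one_mul]

theorem strictMonoOn_iff_symm {β : Type*} [LinearOrder β] (Λ : Set α) (e : α ≃ β) :
    StrictMonoOn e Λ ↔
      ∀ b b', b < b' → e.symm b ∈ Λ → e.symm b' ∈ Λ → e.symm b < e.symm b' := by
  constructor
  · intro h b b' hlt hb hb'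
    rwa [← h.lt_iff_lt hb hb', e.apply_symm_apply, e.apply_symm_apply]
  · intro h a ha a' ha' hlt
    rcases lt_trichotomy (e a) (e a') with h' | h' | h'
    · exact h'
    · exact absurd (e.injective h') hlt.ne
    · have := h _ _ h' (by simpa using ha') (by simpa using ha)
      simp only [Equiv.symm_apply_apply] at this
      exact absurd this hlt.not_gt

theorem ofFn_symm_rev_mem_decreasingOnListings_iff {n : ℕ} (Λ : Finset (Fin n))
    (σ : Equiv.Perm (Fin n)) :
    List.ofFn (σ.symm ∘ Fin.rev) ∈ decreasingOnListings Λ Finset.univ ↔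
      ∀ j j', j ∈ Λ → j' ∈ Λ → j < j' → σ j < σ j' := by
  have hlisting : List.ofFn (σ.symm ∘ Fin.rev) ∈ listings Finset.univ :=
    mem_listings_univ_iff.2 ⟨List.nodup_ofFn.2 (σ.symm.injective.comp Fin.rev_injective),
      fun x => (List.mem_ofFn' _ x).2 ⟨(σ x).rev, by simp⟩⟩
  have hmono : (∀ j j', j ∈ Λ → j' ∈ Λ → j < j' → σ j < σ j') ↔
      StrictMonoOn σ (Λ : Set (Fin n)) :=
    ⟨fun h _ ha _ hb => h _ _ ha hb, fun h _ _ ha hb => h ha hb⟩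
  simp only [decreasingOnListings, Finset.mem_filter, hlisting, true_and, List.pairwise_ofFn,
    hmono, strictMonoOn_iff_symm, Function.comp_apply, Finset.mem_coe]
  constructor
  · intro h p p' hlt hp hp'
    simpa using h (i := p'.rev) (j := p.rev) (Fin.rev_lt_rev.2 hlt) (by simpa using hp')
      (by simpa using hp)
  · intro h k k' hlt hk hk'
    exact h _ _ (Fin.rev_lt_rev.2 hlt) hk' hk

theorem exists_ofFn_symm_rev_eq {n : ℕ} {l : List (Fin n)} (hl : l ∈ listings Finset.univ) :
    ∃ σ : Equiv.Perm (Fin n), List.ofFn (σ.symm ∘ Fin.rev) = l := by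
  obtain ⟨hnd, hmem⟩ := mem_listings_univ_iff.1 hl
  have hlen : l.length = n := by
    simpa using congrArg Multiset.card (mem_listings.1 hl).symm
  let τ : Fin n ≃ Fin n := (finCongr hlen.symm).trans (hnd.getEquivOfForallMemList l hmem)
  refine ⟨(Fin.revPerm.trans τ).symm, List.ext_getElem (by simp [hlen]) fun k _ _ => ?_⟩
  simp [τ, List.Nodup.getEquivOfForallMemList]

theorem sum_filter_perm_eq_sum_decreasingOnListings {M : Type*} [AddCommMonoid M] {n : ℕ}
    (Λ : Finset (Fin n)) (f : List (Fin n) → M) :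
    ∑ σ ∈ Finset.univ.filter (fun σ : Equiv.Perm (Fin n) =>
        ∀ j j', j ∈ Λ → j' ∈ Λ → j < j' → σ j < σ j'), f (List.ofFn (σ.symm ∘ Fin.rev)) =
      ∑ l ∈ decreasingOnListings Λ Finset.univ, f l := by
  refine Finset.sum_bij (fun σ _ => List.ofFn (σ.symm ∘ Fin.rev)) ?_ ?_ ?_ fun _ _ => rfl
  · intro σ hσ
    exact (ofFn_symm_rev_mem_decreasingOnListings_iff Λ σ).2 (Finset.mem_filter.1 hσ).2
  · intro σ _ τ _ h
    have hsymm := Fin.rev_surjective.injective_comp_right (List.ofFn_injective h)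
    exact Equiv.symm_bijective.injective (Equiv.ext (congrFun hsymm))
  · intro l hl
    obtain ⟨σ, rfl⟩ := exists_ofFn_symm_rev_eq (Finset.mem_filter.1 hl).1
    exact ⟨σ, Finset.mem_filter.2 ⟨Finset.mem_univ σ,
      (ofFn_symm_rev_mem_decreasingOnListings_iff Λ σ).1 hl⟩, rfl⟩

end PermSumIdentity

theorem perm_sum_identity_general (ℓ : ℕ) (Λ : Finset (Fin ℓ)) (i : Fin ℓ → ℚ)
    (hi : ∀ j, 0 < i j) :
    ∑ σ ∈ Finset.univ.filter (fun σ : Equiv.Perm (Fin ℓ) =>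
        ∀ j j', j ∈ Λ → j' ∈ Λ → j < j' → σ j < σ j'),
      ∏ j : Fin ℓ, (∑ m ∈ Finset.univ.filter (fun m : Fin ℓ => m ≤ j), i (σ.symm m))⁻¹ =
    (∏ j : Fin ℓ, (i j + if j ∈ Λ then ∑ m ∈ Λ.filter (fun m => m < j), i m else 0))⁻¹ := by
  open PermSumIdentity in
  calc _ = ∑ σ ∈ Finset.univ.filter (fun σ : Equiv.Perm (Fin ℓ) =>
          ∀ j j', j ∈ Λ → j' ∈ Λ → j < j' → σ j < σ j'),
        prodInvSuffixSums i (List.ofFn (σ.symm ∘ Fin.rev)) := by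
        simp only [prodInvSuffixSums_ofFn_rev]
    _ = ∑ l ∈ decreasingOnListings Λ Finset.univ, prodInvSuffixSums i l :=
        sum_filter_perm_eq_sum_decreasingOnListings Λ _
    _ = (∏ j, chainWeight Λ Finset.univ i j)⁻¹ :=
        sum_prodInvSuffixSums_decreasingOnListings Λ hi Finset.univ
    _ = _ := by simp only [chainWeight, Finset.inter_univ]

/-- For `Λ ⊆ {1,…,ℓ}` and positive rationals `i₁,…,i_ℓ`, summing over the
permutations `σ` preserving the order of `Λ`:
`Σ_σ ∏ⱼ 1/(Σ_{m ≤ j} i_{σ⁻¹(m)}) = 1 / ∏ⱼ (iⱼ + Σ_{m<j, m,j ∈ Λ} i_m)`. -/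
theorem perm_sum_identity (ℓ : ℕ) (hℓ : 1 ≤ ℓ) (Λ : Finset (Fin ℓ)) (i : Fin ℓ → ℚ)
    (hi : ∀ j, 0 < i j) :
    ∑ σ ∈ Finset.univ.filter (fun σ : Equiv.Perm (Fin ℓ) =>
        ∀ j j', j ∈ Λ → j' ∈ Λ → j < j' → σ j < σ j'),
      ∏ j : Fin ℓ, (∑ m ∈ Finset.univ.filter (fun m : Fin ℓ => m ≤ j), i (σ.symm m))⁻¹ =
    (∏ j : Fin ℓ, (i j + if j ∈ Λ then ∑ m ∈ Λ.filter (fun m => m < j), i m else 0))⁻¹ :=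
  perm_sum_identity_general ℓ Λ i hi
end

section
/- For ℓ ≥ 1, positive integers i_1,…,i_ℓ summing to n, and Λ ⊆ {1,…,ℓ}, define n^Λ_𝔦 = Σ_{σ ∈ S^Λ_ℓ} n_{σ(𝔦)} where n_𝔦 = (n−1)!/[(∏_j (i_j−1)!)(∏_{j<ℓ} Σ_{m≤j} i_m)] and σ(𝔦) = (i_{σ^{-1}(1)},…,i_{σ^{-1}(ℓ)}). Then n^Λ_𝔦 = n! / [ (∏_{j=1}^{ℓ} (i_j−1)!) · ∏_{j=1}^{ℓ} (i_j + Σ_{m<j, m,j ∈ Λ} i_m) ]. -/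
open scoped Classical

/-- The closed-form coefficient
`n_𝔦 = (n-1)! / ((∏ⱼ (iⱼ-1)!) · ∏_{j<ℓ} (Σ_{m≤j} i_m))`, where `n = Σ iⱼ`. -/
noncomputable def nCoeffClosed {ℓ : ℕ} (i : Fin ℓ → ℕ) : ℚ :=
  (Nat.factorial (∑ j, i j - 1) : ℚ) /
    ((∏ j, (Nat.factorial (i j - 1) : ℚ)) *
      ∏ j ∈ Finset.univ.filter (fun j : Fin ℓ => (j : ℕ) + 1 < ℓ),
        (∑ m ∈ Finset.univ.filter (fun m : Fin ℓ => m ≤ j), (i m : ℚ)))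

/-!
Since the last prefix sum of `σ(𝔦)` is `n`,
`n_{σ(𝔦)} = n! / ∏ⱼ (iⱼ-1)! · ∏ₖ 1/(i_{σ⁻¹(1)} + ⋯ + i_{σ⁻¹(k)})`, so the claim is the identity
`∑ ∏ₖ 1/(prefix sums) = ∏ⱼ 1/xⱼ`, with `xⱼ = iⱼ + ∑_{m<j, m,j∈Λ} i_m`, over the orderings of the
indices in which `Λ` appears in increasing order. It holds for the orderings of any finite set `s`
of indices, by induction on `s`. The last prefix sum is `W = ∑_{j∈s} iⱼ`, and the last entry `a` is
either outside `Λ` or the largest element of `Λ ∩ s`. Removing such an `a` changes no other `xⱼ`,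
so the orderings ending in `a` contribute `xₐ / W · ∏_{j∈s} 1/xⱼ`; and these `xₐ` add up to `W`,
because `x` of the largest element of `Λ ∩ s` absorbs the weights of the rest of `Λ ∩ s`.
-/

namespace LambdaOrderings

open Finset

section Orderings

variable {α : Type*} [DecidableEq α]

noncomputable def orderings (s : Finset α) : Finset (List α) := s.toList.permutations.toFinset

theorem mem_orderings {s : Finset α} {l : List α} :
    l ∈ orderings s ↔ (l : Multiset α) = s.val := by
  simp [orderings, ← Multiset.coe_eq_coe]

theorem mem_of_mem_orderings {s : Finset α} {l : List α} (hl : l ∈ orderings s) {a : α} :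
    a ∈ l ↔ a ∈ s := by
  rw [← Finset.mem_val, ← mem_orderings.mp hl, Multiset.mem_coe]

theorem cons_mem_orderings {s : Finset α} {a : α} {t : List α} :
    a :: t ∈ orderings s ↔ a ∈ s ∧ t ∈ orderings (s.erase a) := by
  rw [mem_orderings, mem_orderings, ← Multiset.cons_coe, ← Multiset.singleton_add,
    add_comm, Multiset.add_singleton_eq_iff, Finset.erase_val, Finset.mem_val]

theorem orderings_empty : orderings (∅ : Finset α) = {[]} := by
  simp [orderings]

theorem sum_orderings {M : Type*} [AddCommMonoid M] {s : Finset α} (hs : s.Nonempty)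
    (F : List α → M) :
    ∑ l ∈ orderings s, F l = ∑ a ∈ s, ∑ t ∈ orderings (s.erase a), F (a :: t) := by
  obtain ⟨a₀, -⟩ := id hs
  have nil_notMem : [] ∉ orderings s := fun h =>
    hs.ne_empty (Finset.val_eq_zero.mp (mem_orderings.mp h).symm)
  rw [sum_sigma']
  refine (sum_nbij' (fun p : (_ : α) × List α => p.1 :: p.2) (fun l => ⟨l.headD a₀, l.tail⟩) ?_ ?_
    (fun _ _ => rfl) ?_ fun _ _ => rfl).symm
  · rintro ⟨a, t⟩ h
    simpa [cons_mem_orderings] using h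
  · rintro (_ | ⟨a, t⟩) h
    · exact absurd h nil_notMem
    · simpa [cons_mem_orderings] using h
  · rintro (_ | ⟨a, t⟩) h
    · exact absurd h nil_notMem
    · rfl

end Orderings

section Weights

variable {α K : Type*} [LinearOrder α] [Field K] (w : α → K) (Λ : Finset α)

/-- A list is read as a sequence from its last entry backwards, so the tails of the list are
the prefixes of the sequence. -/
def invPrefixSumProd : List α → K
  | [] => 1
  | a :: t => (w a + (t.map w).sum)⁻¹ * invPrefixSumProd t

def IsDescendingOn (l : List α) : Prop :=
  l.Pairwise fun a b => a ∈ Λ → b ∈ Λ → b < a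

noncomputable def shiftedWeight (s : Finset α) (j : α) : K :=
  w j + if j ∈ Λ then ∑ m ∈ (Λ ∩ s).filter (· < j), w m else 0

def CanBeLast (s : Finset α) (a : α) : Prop :=
  a ∈ Λ → ∀ b ∈ s.erase a, b ∈ Λ → b < a

variable {w Λ}

theorem shiftedWeight_pos [LinearOrder K] [IsStrictOrderedRing K] (hw : ∀ a, 0 < w a)
    (s : Finset α) (j : α) :
    0 < shiftedWeight w Λ s j := by
  refine add_pos_of_pos_of_nonneg (hw j) ?_
  split_ifs
  exacts [sum_nonneg fun m _ => (hw m).le, le_rfl]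

theorem shiftedWeight_erase {s : Finset α} {a j : α} (ha : CanBeLast Λ s a)
    (hj : j ∈ s.erase a) :
    shiftedWeight w Λ (s.erase a) j = shiftedWeight w Λ s j := by
  unfold shiftedWeight
  split_ifs with hjΛ
  · rw [inter_erase, filter_erase, erase_eq_of_notMem]
    simp only [mem_filter, mem_inter, not_and, and_imp]
    exact fun haΛ _ haj => (ha haΛ j hj hjΛ).not_gt haj
  · rfl

theorem prod_shiftedWeight_erase [LinearOrder K] [IsStrictOrderedRing K] (hw : ∀ a, 0 < w a)
    {s : Finset α} {a : α} (has : a ∈ s) (ha : CanBeLast Λ s a) :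
    ∏ j ∈ s.erase a, (shiftedWeight w Λ (s.erase a) j)⁻¹
      = shiftedWeight w Λ s a * ∏ j ∈ s, (shiftedWeight w Λ s j)⁻¹ := by
  rw [prod_congr rfl fun j hj => by rw [shiftedWeight_erase ha hj], ← mul_prod_erase s _ has,
    mul_inv_cancel_left₀ (shiftedWeight_pos hw s a).ne']

theorem canBeLast_iff_eq_max' {s : Finset α} (hT : (s.filter (· ∈ Λ)).Nonempty) {a : α}
    (ha : a ∈ s.filter (· ∈ Λ)) : CanBeLast Λ s a ↔ a = (s.filter (· ∈ Λ)).max' hT := by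
  set T := s.filter (· ∈ Λ)
  have hM := mem_filter.mp (max'_mem T hT)
  refine ⟨fun h => ?_, fun h _ b hb hbΛ => ?_⟩
  · by_contra hne
    have := h (mem_filter.mp ha).2 _ (mem_erase.mpr ⟨Ne.symm hne, hM.1⟩) hM.2
    exact this.not_ge (le_max' T a ha)
  · subst h
    exact (le_max' T b (mem_filter.mpr ⟨(mem_erase.mp hb).2, hbΛ⟩)).lt_of_ne (mem_erase.mp hb).1

theorem shiftedWeight_max' {s : Finset α} (hT : (s.filter (· ∈ Λ)).Nonempty) :
    shiftedWeight w Λ s ((s.filter (· ∈ Λ)).max' hT) = ∑ a ∈ s.filter (· ∈ Λ), w a := by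
  set T := s.filter (· ∈ Λ)
  have hM : T.max' hT ∈ T := max'_mem T hT
  have hbelow : (Λ ∩ s).filter (· < T.max' hT) = T.erase (T.max' hT) := by
    ext m
    simp only [mem_filter, mem_inter, mem_erase, T]
    constructor
    · rintro ⟨⟨hmΛ, hms⟩, hlt⟩
      exact ⟨hlt.ne, hms, hmΛ⟩
    · rintro ⟨hne, hms, hmΛ⟩
      exact ⟨⟨hmΛ, hms⟩, (le_max' T m (mem_filter.mpr ⟨hms, hmΛ⟩)).lt_of_ne hne⟩
  rw [shiftedWeight, if_pos (mem_filter.mp hM).2, hbelow, add_sum_erase T w hM]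

theorem sum_shiftedWeight_canBeLast (s : Finset α) :
    ∑ a ∈ s with CanBeLast Λ s a, shiftedWeight w Λ s a = ∑ a ∈ s, w a := by
  rw [sum_filter, ← sum_filter_add_sum_filter_not s (· ∈ Λ),
    ← sum_filter_add_sum_filter_not s (· ∈ Λ) w]
  congr 1
  · rcases (s.filter (· ∈ Λ)).eq_empty_or_nonempty with hT | hT
    · simp [hT]
    rw [sum_congr rfl fun a ha => if_congr (canBeLast_iff_eq_max' hT ha) rfl rfl, sum_ite_eq',
      if_pos (max'_mem _ hT), shiftedWeight_max']
  · refine sum_congr rfl fun a ha => ?_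
    have haΛ : a ∉ Λ := (mem_filter.mp ha).2
    rw [if_pos (show CanBeLast Λ s a from fun h => absurd h haΛ), shiftedWeight, if_neg haΛ,
      add_zero]

theorem isDescendingOn_cons_iff {s : Finset α} {a : α} {t : List α}
    (ht : t ∈ orderings (s.erase a)) :
    IsDescendingOn Λ (a :: t) ↔ CanBeLast Λ s a ∧ IsDescendingOn Λ t := by
  refine List.pairwise_cons.trans (and_congr_left' ⟨fun h haΛ b hb => ?_, fun h b hb haΛ => ?_⟩)
  · exact h b ((mem_of_mem_orderings ht).mpr hb) haΛ
  · exact h haΛ b ((mem_of_mem_orderings ht).mp hb)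

theorem invPrefixSumProd_cons {s : Finset α} {a : α} {t : List α} (has : a ∈ s)
    (ht : t ∈ orderings (s.erase a)) :
    invPrefixSumProd w (a :: t) = (∑ j ∈ s, w j)⁻¹ * invPrefixSumProd w t := by
  rw [invPrefixSumProd, ← Multiset.sum_coe, ← Multiset.map_coe, mem_orderings.mp ht,
    ← Finset.sum_eq_multiset_sum, add_sum_erase s w has]

theorem sum_invPrefixSumProd_orderings [LinearOrder K] [IsStrictOrderedRing K]
    (hw : ∀ a, 0 < w a) (s : Finset α) :
    ∑ l ∈ orderings s with IsDescendingOn Λ l, invPrefixSumProd w l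
      = ∏ j ∈ s, (shiftedWeight w Λ s j)⁻¹ := by
  induction s using Finset.strongInduction with
  | H s ih =>
  rcases s.eq_empty_or_nonempty with rfl | hs
  · rw [orderings_empty, filter_singleton, if_pos (by exact List.Pairwise.nil), sum_singleton,
      prod_empty]
    rfl
  set P := ∏ j ∈ s, (shiftedWeight w Λ s j)⁻¹
  have hlast : ∀ a ∈ s,
      ∑ t ∈ orderings (s.erase a) with IsDescendingOn Λ (a :: t), invPrefixSumProd w (a :: t)
        = (∑ j ∈ s, w j)⁻¹ * ((if CanBeLast Λ s a then shiftedWeight w Λ s a else 0) * P) := by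
    intro a has
    rw [filter_congr fun t ht => isDescendingOn_cons_iff ht]
    split_ifs with ha
    · simp only [ha, true_and]
      rw [sum_congr rfl fun t ht => invPrefixSumProd_cons has (mem_filter.mp ht).1, ← mul_sum,
        ih _ (erase_ssubset has), prod_shiftedWeight_erase hw has ha]
    · simp [ha]
  have hW : (∑ j ∈ s, w j) ≠ 0 := (sum_pos (fun j _ => hw j) hs).ne'
  rw [sum_filter, sum_orderings hs]
  simp only [← sum_filter]
  rw [sum_congr rfl hlast, ← mul_sum, ← sum_mul, ← sum_filter, sum_shiftedWeight_canBeLast,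
    inv_mul_cancel_left₀ hW]

end Weights

section Fin

variable {K : Type*} [Field K] {m : ℕ}

theorem sum_filter_le_castSucc {M : Type*} [AddCommMonoid M] (f : Fin (m + 1) → M)
    (j : Fin m) :
    ∑ k ∈ univ.filter (· ≤ j.castSucc), f k = ∑ k ∈ univ.filter (· ≤ j), f k.castSucc := by
  rw [sum_filter, sum_filter, Fin.sum_univ_castSucc]
  simp [Fin.castSucc_le_castSucc_iff, (Fin.castSucc_lt_last j).not_ge]

theorem invPrefixSumProd_ofFn_reverse {α : Type*} (w : α → K) :
    ∀ {m : ℕ} (f : Fin m → α),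
      invPrefixSumProd w (List.ofFn f).reverse = ∏ j, (∑ k ∈ univ.filter (· ≤ j), w (f k))⁻¹
  | 0, _ => rfl
  | m + 1, f => by
    rw [List.ofFn_succ', List.concat_eq_append, List.reverse_append, List.reverse_singleton,
      List.singleton_append, invPrefixSumProd, invPrefixSumProd_ofFn_reverse w,
      Fin.prod_univ_castSucc, mul_comm]
    congr 2
    · exact funext fun j => by rw [sum_filter_le_castSucc]
    · rw [List.map_reverse, List.sum_reverse, List.map_ofFn, List.sum_ofFn,
        filter_true_of_mem fun k _ => Fin.le_last k, Fin.sum_univ_castSucc, add_comm]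
      rfl

theorem isDescendingOn_ofFn_symm_reverse_iff (Λ : Finset (Fin m)) (σ : Equiv.Perm (Fin m)) :
    IsDescendingOn Λ (List.ofFn σ.symm).reverse ↔
      ∀ j j', j ∈ Λ → j' ∈ Λ → j < j' → σ j < σ j' := by
  rw [IsDescendingOn, List.pairwise_reverse, List.pairwise_ofFn]
  constructor
  · intro h j j' hj hj' hlt
    refine lt_of_not_ge fun hge => hlt.not_gt ?_
    have := h (hge.lt_of_ne fun heq => hlt.ne (σ.injective heq).symm)
    rw [Equiv.symm_apply_apply, Equiv.symm_apply_apply] at this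
    exact this hj hj'
  · intro h k k' hlt hk' hk
    refine lt_of_not_ge fun hge => hlt.not_gt ?_
    have := h _ _ hk' hk (hge.lt_of_ne fun heq => hlt.ne (σ.symm.injective heq).symm)
    simpa using this

theorem exists_perm_ofFn_eq {l : List (Fin m)} (hl : l ∈ orderings univ) :
    ∃ σ : Equiv.Perm (Fin m), List.ofFn σ = l := by
  have hval := mem_orderings.mp hl
  have hnd : l.Nodup := Multiset.coe_nodup.mp (hval ▸ univ.nodup)
  have hlen : l.length = m := by simpa using congrArg Multiset.card hval
  refine ⟨(finCongr hlen.symm).trans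
    (hnd.getEquivOfForallMemList l fun a => (mem_of_mem_orderings hl).mpr (mem_univ a)), ?_⟩
  exact List.ext_get (by simp [hlen]) fun k _ _ => by simp

theorem sum_perm_eq_sum_orderings {M : Type*} [AddCommMonoid M] (G : List (Fin m) → M) :
    ∑ σ : Equiv.Perm (Fin m), G (List.ofFn σ.symm).reverse = ∑ l ∈ orderings univ, G l := by
  refine sum_bij (fun σ _ => (List.ofFn σ.symm).reverse) (fun σ _ => ?_) (fun σ _ τ _ h => ?_)
    (fun l hl => ?_) fun _ _ => rfl
  · rw [mem_orderings, Multiset.coe_reverse,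
      Multiset.Nodup.ext (Multiset.coe_nodup.mpr (List.nodup_ofFn.mpr σ.symm.injective))
        univ.nodup]
    simpa using fun a => σ.symm.surjective a
  · exact Equiv.symm_bijective.injective
      (Equiv.coe_fn_injective (List.ofFn_injective (List.reverse_injective h)))
  · obtain ⟨τ, hτ⟩ := exists_perm_ofFn_eq (l := l.reverse)
      (mem_orderings.mpr (by rw [Multiset.coe_reverse, mem_orderings.mp hl]))
    exact ⟨τ.symm, mem_univ _, by simp [hτ]⟩

theorem sum_perm_filter_eq_sum_orderings {M : Type*} [AddCommMonoid M] (Λ : Finset (Fin m))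
    (G : List (Fin m) → M) :
    ∑ σ ∈ univ.filter (fun σ : Equiv.Perm (Fin m) =>
        ∀ j j', j ∈ Λ → j' ∈ Λ → j < j' → σ j < σ j'), G (List.ofFn σ.symm).reverse
      = ∑ l ∈ orderings univ with IsDescendingOn Λ l, G l := by
  rw [sum_filter, sum_filter, ← sum_perm_eq_sum_orderings]
  exact sum_congr rfl fun σ _ => if_congr (isDescendingOn_ofFn_symm_reverse_iff Λ σ).symm rfl rfl

end Fin

end LambdaOrderings

open Finset LambdaOrderings

theorem nCoeffClosed_eq_factorial_div {ℓ : ℕ} (v : Fin ℓ → ℕ) (hv : ∀ j, 0 < v j) :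
    nCoeffClosed v = ((∑ j, v j).factorial : ℚ) /
      ((∏ j, ((v j - 1).factorial : ℚ)) * ∏ j, ∑ m ∈ univ.filter (· ≤ j), (v m : ℚ)) := by
  rcases ℓ with _ | ℓ
  · simp [nCoeffClosed]
  have hinit : univ.filter (fun j : Fin (ℓ + 1) => (j : ℕ) + 1 < ℓ + 1)
      = univ.erase (Fin.last ℓ) := by
    ext j
    simp only [mem_filter, mem_univ, true_and, mem_erase, ne_eq, and_true, Fin.ext_iff,
      Fin.val_last]
    omega
  have htotal : ∑ m ∈ univ.filter (· ≤ Fin.last ℓ), (v m : ℚ) = ((∑ j, v j : ℕ) : ℚ) := by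
    rw [filter_true_of_mem fun k _ => Fin.le_last k]
    push_cast
    rfl
  have hpos : 0 < ∑ j, v j := sum_pos (fun j _ => hv j) univ_nonempty
  rw [nCoeffClosed, hinit,
    ← prod_erase_mul univ (fun j => ∑ m ∈ univ.filter (· ≤ j), (v m : ℚ)) (mem_univ _), htotal,
    ← mul_assoc, ← Nat.mul_factorial_pred hpos.ne', Nat.cast_mul, mul_comm ((∑ j, v j : ℕ) : ℚ),
    mul_div_mul_right _ _ (by positivity)]

theorem nLambdaCoeff_closed_form_general (ℓ : ℕ) (Λ : Finset (Fin ℓ))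
    (i : Fin ℓ → ℕ) (hi : ∀ j, 0 < i j) (n : ℕ) (hn : ∑ j, i j = n) :
    ∑ σ ∈ Finset.univ.filter (fun σ : Equiv.Perm (Fin ℓ) =>
        ∀ j j', j ∈ Λ → j' ∈ Λ → j < j' → σ j < σ j'),
      nCoeffClosed (fun j => i (σ.symm j)) =
    (n.factorial : ℚ) /
      ((∏ j, (Nat.factorial (i j - 1) : ℚ)) *
        ∏ j, ((i j : ℚ) + if j ∈ Λ then ∑ m ∈ Λ.filter (· < j), (i m : ℚ) else 0)) := by
  set w : Fin ℓ → ℚ := fun j => i j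
  set c : ℚ := n.factorial / ∏ j, ((i j - 1).factorial : ℚ)
  have hterm : ∀ σ : Equiv.Perm (Fin ℓ),
      nCoeffClosed (fun j => i (σ.symm j))
        = c * invPrefixSumProd w (List.ofFn σ.symm).reverse := by
    intro σ
    rw [nCoeffClosed_eq_factorial_div _ fun j => hi _, Equiv.sum_comp σ.symm i, hn,
      Equiv.prod_comp σ.symm fun j => ((i j - 1).factorial : ℚ), invPrefixSumProd_ofFn_reverse,
      prod_inv_distrib]
    ring
  calc _ = ∑ σ ∈ univ.filter (fun σ : Equiv.Perm (Fin ℓ) =>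
          ∀ j j', j ∈ Λ → j' ∈ Λ → j < j' → σ j < σ j'),
        c * invPrefixSumProd w (List.ofFn σ.symm).reverse := sum_congr rfl fun σ _ => hterm σ
    _ = c * ∏ j, (shiftedWeight w Λ univ j)⁻¹ := by
      rw [← mul_sum, sum_perm_filter_eq_sum_orderings,
        sum_invPrefixSumProd_orderings fun j => Nat.cast_pos.mpr (hi j)]
    _ = _ := by
      simp only [c, shiftedWeight, inter_univ, prod_inv_distrib]
      ring

/-- `n^Λ_𝔦 = Σ_{σ ∈ S^Λ_ℓ} n_{σ(𝔦)}` has the closed form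
`n! / ((∏ⱼ (iⱼ-1)!) · ∏ⱼ (iⱼ + Σ_{m<j, m,j∈Λ} i_m))`. -/
theorem nLambdaCoeff_closed_form (ℓ : ℕ) (hℓ : 1 ≤ ℓ) (Λ : Finset (Fin ℓ))
    (i : Fin ℓ → ℕ) (hi : ∀ j, 0 < i j) (n : ℕ) (hn : ∑ j, i j = n) :
    ∑ σ ∈ Finset.univ.filter (fun σ : Equiv.Perm (Fin ℓ) =>
        ∀ j j', j ∈ Λ → j' ∈ Λ → j < j' → σ j < σ j'),
      nCoeffClosed (fun j => i (σ.symm j)) =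
    (n.factorial : ℚ) /
      ((∏ j, (Nat.factorial (i j - 1) : ℚ)) *
        ∏ j, ((i j : ℚ) + if j ∈ Λ then ∑ m ∈ Λ.filter (· < j), (i m : ℚ) else 0)) :=
  nLambdaCoeff_closed_form_general ℓ Λ i hi n hn
end

section
/- Let p be prime and i_1,…,i_ℓ positive integers with Σ i_j = p. The rational number p!/[(∏_j i_j!)·P_𝔦], where P_𝔦 is the number of permutations of {1,…,ℓ} fixing the vector (i_1,…,i_ℓ), is an integer, and it is nonzero modulo p if and only if either ℓ = 1 (so i_1 = p) or ℓ = p with all i_j = 1. -/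
/-!
The quotient is `Multiset.bell` of the multiset of the `iⱼ` (the number of partitions of a
`p`-set into blocks of sizes `iⱼ`): `Multiset.bell_mul_eq` reads
`bell · ∏ⱼ iⱼ! · ∏ₖ (#{j | iⱼ = k})! = p!`, and the last product is the order of the
stabilizer.
As `p ∣ p!`, the prime `p` divides the Bell number unless it divides a factorial of the
denominator, i.e. unless some `iⱼ = p` (then `ℓ = 1`) or some multiplicity reaches `p`
(then `ℓ = p` and all `iⱼ = 1`); in these two cases the Bell number is `1`.
-/

open Finset Nat Equiv

namespace Multiset

theorem eq_singleton_of_mem_of_sum_eq {m : Multiset ℕ} (h0 : 0 ∉ m) {a : ℕ} (ha : a ∈ m)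
    (hsum : m.sum = a) : m = {a} := by
  obtain ⟨t, rfl⟩ := exists_cons_of_mem ha
  have ht : ∀ b ∈ t, b = 0 := sum_eq_zero_iff.1 (by simpa using hsum)
  rw [eq_zero_of_forall_notMem fun b hb => h0 (ht b hb ▸ mem_cons_of_mem hb)]
  rfl

theorem card_le_sum_of_zero_notMem {m : Multiset ℕ} (h0 : 0 ∉ m) : card m ≤ m.sum := by
  simpa using card_nsmul_le_sum (a := 1) fun x hx => one_le_iff_ne_zero.2 fun h => h0 (h ▸ hx)

theorem eq_replicate_one_of_sum_eq_card {m : Multiset ℕ} (h0 : 0 ∉ m) (h : m.sum = card m) :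
    m = replicate (card m) 1 := by
  refine eq_replicate_card.2 fun b hb => ?_
  obtain ⟨t, rfl⟩ := exists_cons_of_mem hb
  have hb0 : b ≠ 0 := fun hb0 => h0 (hb0 ▸ hb)
  have ht := card_le_sum_of_zero_notMem fun ht => h0 (mem_cons_of_mem ht)
  simp only [sum_cons, card_cons] at h
  omega

theorem prime_dvd_bell {p : ℕ} (hp : p.Prime) {m : Multiset ℕ} (h0 : 0 ∉ m) (hsum : m.sum = p)
    (hsingleton : m ≠ {p}) (hreplicate : m ≠ replicate p 1) : p ∣ m.bell := by
  have hlt : ∀ a ∈ m, a < p := fun a ha =>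
    (hsum ▸ le_sum_of_mem ha).lt_of_ne fun h =>
      hsingleton (h ▸ eq_singleton_of_mem_of_sum_eq h0 ha (hsum.trans h.symm))
  have hcard : card m < p := (hsum ▸ card_le_sum_of_zero_notMem h0).lt_of_ne fun h =>
    hreplicate (h ▸ eq_replicate_one_of_sum_eq_card h0 (hsum.trans h.symm))
  have hfactorials : ¬ p ∣ (m.map (· !)).prod := fun hd => by
    obtain ⟨a, ha, hpa⟩ := hp.prime.exists_mem_multiset_map_dvd hd
    exact (hlt a ha).not_ge (hp.dvd_factorial.1 hpa)
  have hcounts : ¬ p ∣ ∏ j ∈ m.toFinset.erase 0, (m.count j)! :=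
    hp.prime.not_dvd_finsetProd fun j _ hd =>
      ((count_le_card j m).trans_lt hcard).not_ge (hp.dvd_factorial.1 hd)
  have hdvd : p ∣ m.bell * (m.map (· !)).prod * ∏ j ∈ m.toFinset.erase 0, (m.count j)! := by
    rw [bell_mul_eq, hsum]
    exact dvd_factorial hp.pos le_rfl
  rcases hp.dvd_mul.1 hdvd with hd | hd
  · exact (hp.dvd_mul.1 hd).resolve_right hfactorials
  · exact absurd hd hcounts

theorem not_prime_dvd_bell_iff {p : ℕ} (hp : p.Prime) {m : Multiset ℕ} (h0 : 0 ∉ m)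
    (hsum : m.sum = p) : ¬ p ∣ m.bell ↔ m = {p} ∨ m = replicate p 1 := by
  refine ⟨fun hndvd => ?_, ?_⟩
  · by_contra! h
    exact hndvd (prime_dvd_bell hp h0 hsum h.1 h.2)
  · rintro (rfl | rfl)
    · change ¬ p ∣ uniformBell 1 p
      simpa [uniformBell_one_left] using hp.not_dvd_one
    · change ¬ p ∣ uniformBell p 1
      simpa [uniformBell_one_right] using hp.not_dvd_one

end Multiset

section

variable {α : Type*} [Fintype α]

theorem card_stabilizer_eq_prod_factorial_count [DecidableEq α] (i : α → ℕ) :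
    #{σ : Perm α | ∀ j, i (σ j) = i j} =
      ∏ k ∈ (univ.val.map i).toFinset, ((univ.val.map i).count k)! := by
  have h := DomMulAct.stabilizer_card' i
  simp only [Fintype.card_subtype, funext_iff, Function.comp_apply] at h
  rw [h]
  refine prod_congr rfl fun k _ => ?_
  rw [Multiset.count_map]
  simp_rw [eq_comm (a := k)]
  rfl

theorem bell_map_univ_mul_eq [DecidableEq α] (i : α → ℕ) (hi : ∀ j, 0 < i j) :
    (univ.val.map i).bell * (∏ j, (i j)!) * #{σ : Perm α | ∀ j, i (σ j) = i j} =
      (∑ j, i j)! := by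
  have h0 : 0 ∉ univ.val.map i := by simpa using fun j => (hi j).ne'
  rw [card_stabilizer_eq_prod_factorial_count,
    ← Finset.erase_eq_of_notMem (Multiset.mem_toFinset.not.2 h0)]
  have := Multiset.bell_mul_eq (univ.val.map i)
  rwa [Multiset.map_map] at this

theorem map_univ_eq_singleton_iff {i : α → ℕ} {n : ℕ} (hsum : ∑ j, i j = n) :
    univ.val.map i = {n} ↔ Fintype.card α = 1 := by
  refine ⟨fun h => by simpa using congrArg Multiset.card h, fun h => ?_⟩
  have hcard : Multiset.card (univ.val.map i) = 1 := by simpa using h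
  obtain ⟨a, ha⟩ := Multiset.card_eq_one.1 hcard
  rw [ha, ← hsum, Finset.sum_eq_multiset_sum, ha, Multiset.sum_singleton]

theorem map_univ_eq_replicate_one_iff {i : α → ℕ} {n : ℕ} :
    univ.val.map i = Multiset.replicate n 1 ↔ Fintype.card α = n ∧ ∀ j, i j = 1 := by
  simp [Multiset.eq_replicate]

end

/-- For `p` prime and positive integers `i₁,…,i_ℓ` summing to `p`, the rational number
`p! / ((∏ⱼ iⱼ!) · P_𝔦)`, where `P_𝔦` is the number of permutations of `{1,…,ℓ}` fixing
the vector `(i₁,…,i_ℓ)`, is an integer, and it is nonzero mod `p` iff `ℓ = 1` (so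
`i₁ = p`) or `ℓ = p` with all `iⱼ = 1`. -/
theorem multinomial_coeff_mod_p (p ℓ : ℕ) (hp : p.Prime) (i : Fin ℓ → ℕ)
    (hi : ∀ j, 0 < i j) (hsum : ∑ j, i j = p) :
    ∃ m : ℕ,
      ((p.factorial : ℚ) /
          ((∏ j, (Nat.factorial (i j) : ℚ)) *
            ((Finset.univ.filter (fun σ : Equiv.Perm (Fin ℓ) => ∀ j, i (σ j) = i j)).card : ℚ))
        = (m : ℚ)) ∧
      (¬ (p ∣ m) ↔ (ℓ = 1 ∨ (ℓ = p ∧ ∀ j, i j = 1))) := by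
  have key : (univ.val.map i).bell * (∏ j, (i j)!) *
      #{σ : Perm (Fin ℓ) | ∀ j, i (σ j) = i j} = p ! := by
    -- `convert` matches the `Nat.decidableForallFin` instance here with the generic one
    convert bell_map_univ_mul_eq i hi
    exact hsum.symm
  have h0 : 0 ∉ univ.val.map i := by simpa using fun j => (hi j).ne'
  refine ⟨(univ.val.map i).bell, ?_, ?_⟩
  · have hden : (∏ j, (i j)!) * #{σ : Perm (Fin ℓ) | ∀ j, i (σ j) = i j} ≠ 0 := by
      have h := factorial_ne_zero p
      rw [← key, mul_assoc] at h
      exact right_ne_zero_of_mul h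
    rw [div_eq_iff (by exact_mod_cast hden), ← key]
    push_cast
    ring
  · rw [Multiset.not_prime_dvd_bell_iff hp h0 hsum, map_univ_eq_singleton_iff hsum,
      map_univ_eq_replicate_one_iff, Fintype.card_fin]
end

section
/- Let C be a smooth curve over a field k of characteristic p, θ a derivation on an affine open U, and f_{θ^p} the unique regular function on U satisfying f_{θ^p}·θ = θ^p (as derivations). Then θ(f_{θ^p}) = 0. -/
/-- If `D` is a nonzero derivation of an integral domain `A` of characteristic `p`, and
`f ∈ A` satisfies `D^p = f·D` as additive maps (the function `f_{θ^p}`), then `D f = 0`. -/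
theorem deriv_fthetap_eq_zero {A : Type*} [CommRing A] [IsDomain A] {p : ℕ} (hp : p.Prime)
    [CharP A p] (D : Derivation ℤ A A) (hD : D ≠ 0) (f : A)
    (hf : ∀ a : A, (⇑D)^[p] a = f * D a) : D f = 0 := by
  obtain ⟨a, ha⟩ : ∃ a, D a ≠ 0 := by
    by_contra h
    push_neg at h
    exact hD (by ext x; simp [h x])
  have key : D f * D a = 0 := by
    have h1 : (⇑D)^[p] (D a) = f * D (D a) := hf (D a)
    have h2 : D ((⇑D)^[p] a) = D (f * D a) := by rw [hf a]
    have h3 : (⇑D)^[p] (D a) = D ((⇑D)^[p] a) := by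
      rw [← Function.iterate_succ_apply, Function.iterate_succ_apply']
    rw [← h3, h1, Derivation.leibniz] at h2
    simp only [smul_eq_mul] at h2
    linear_combination -h2
  exact (mul_eq_zero.mp key).resolve_right ha
end

section
/- Let D be a derivation of a commutative ℤ/p-algebra A (p prime), let T ∈ A, and let f ∈ A satisfy D^p = f·D as additive operators. Then the operator (T + D)^p − f·T − D^p, where T + D acts on A by a ↦ Ta + D(a), equals multiplication by T^p + D^{p-1}(T) − f·T. -/
open Finset Polynomial

/-- Pushing `x` through `z ^ m` using iterated commutators. -/
private lemma pow_mul_expand {S : Type*} [Ring S] (z x : S) (m : ℕ) :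
    z ^ m * x = ∑ k ∈ Finset.range (m + 1),
      m.choose k • ((fun u => z * u - u * z)^[k] x * z ^ (m - k)) := by
  induction m with
  | zero => simp
  | succ m ih =>
    have step : ∀ k ∈ Finset.range (m + 1),
        z * (m.choose k • ((fun u => z * u - u * z)^[k] x * z ^ (m - k)))
          = m.choose k • ((fun u => z * u - u * z)^[k + 1] x * z ^ (m + 1 - (k + 1)))
            + m.choose k • ((fun u => z * u - u * z)^[k] x * z ^ (m + 1 - k)) := by
      intro k hk
      rw [Finset.mem_range] at hk
      have e1 : m + 1 - (k + 1) = m - k := by omega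
      have e2 : m + 1 - k = (m - k) + 1 := by omega
      rw [e1, e2, Function.iterate_succ_apply', pow_succ', mul_smul_comm, ← smul_add]
      congr 1
      noncomm_ring
    calc z ^ (m + 1) * x = z * (z ^ m * x) := by rw [pow_succ', mul_assoc]
      _ = ∑ k ∈ Finset.range (m + 1),
            (m.choose k • ((fun u => z * u - u * z)^[k + 1] x * z ^ (m + 1 - (k + 1)))
              + m.choose k • ((fun u => z * u - u * z)^[k] x * z ^ (m + 1 - k))) := by
          rw [ih, Finset.mul_sum]; exact Finset.sum_congr rfl step
      _ = (∑ k ∈ Finset.range (m + 1),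
            m.choose k • ((fun u => z * u - u * z)^[k + 1] x * z ^ (m + 1 - (k + 1))))
          + ∑ k ∈ Finset.range (m + 1),
            m.choose k • ((fun u => z * u - u * z)^[k] x * z ^ (m + 1 - k)) :=
          Finset.sum_add_distrib
      _ = (∑ k ∈ Finset.range (m + 1 + 1), if k = 0 then 0 else
            m.choose (k - 1) • ((fun u => z * u - u * z)^[k] x * z ^ (m + 1 - k)))
          + ∑ k ∈ Finset.range (m + 1 + 1),
            m.choose k • ((fun u => z * u - u * z)^[k] x * z ^ (m + 1 - k)) := by
          congr 1
          · rw [Finset.sum_range_succ' (fun k => if k = 0 then 0 else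
              m.choose (k - 1) • ((fun u => z * u - u * z)^[k] x * z ^ (m + 1 - k))) (m + 1)]
            simp
          · conv_rhs => rw [Finset.sum_range_succ]
            rw [Nat.choose_succ_self, zero_smul, add_zero]
      _ = ∑ k ∈ Finset.range (m + 1 + 1),
            (m + 1).choose k • ((fun u => z * u - u * z)^[k] x * z ^ (m + 1 - k)) := by
          rw [← Finset.sum_add_distrib]
          refine Finset.sum_congr rfl ?_
          intro k _
          rcases Nat.eq_zero_or_pos k with rfl | hkpos
          · simp
          · obtain ⟨i, rfl⟩ : ∃ i, k = i + 1 := ⟨k - 1, by omega⟩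
            rw [if_neg (Nat.succ_ne_zero i), Nat.add_sub_cancel,
              Nat.choose_succ_succ' m i, add_smul]

/-- Sum of conjugates identity. -/
private lemma sum_conj_expand {S : Type*} [Ring S] (z x : S) (n : ℕ) :
    ∑ j ∈ Finset.range (n + 1), z ^ j * x * z ^ (n - j)
      = ∑ k ∈ Finset.range (n + 1),
          (n + 1).choose (k + 1) • ((fun u => z * u - u * z)^[k] x * z ^ (n - k)) := by
  induction n with
  | zero => simp
  | succ n ih =>
    calc ∑ j ∈ Finset.range (n + 1 + 1), z ^ j * x * z ^ (n + 1 - j)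
        = (∑ j ∈ Finset.range (n + 1), z ^ j * x * z ^ (n - j)) * z + z ^ (n + 1) * x := by
          rw [Finset.sum_range_succ, Nat.sub_self, pow_zero, mul_one, Finset.sum_mul]
          congr 1
          refine Finset.sum_congr rfl ?_
          intro j hj
          rw [Finset.mem_range] at hj
          rw [show n + 1 - j = (n - j) + 1 by omega, pow_succ, ← mul_assoc]
      _ = (∑ k ∈ Finset.range (n + 1),
            (n + 1).choose (k + 1) • ((fun u => z * u - u * z)^[k] x * z ^ (n + 1 - k)))
          + ∑ k ∈ Finset.range (n + 1 + 1),
            (n + 1).choose k • ((fun u => z * u - u * z)^[k] x * z ^ (n + 1 - k)) := by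
          rw [ih, Finset.sum_mul, pow_mul_expand z x (n + 1)]
          congr 1
          refine Finset.sum_congr rfl ?_
          intro k hk
          rw [Finset.mem_range] at hk
          rw [smul_mul_assoc, mul_assoc, ← pow_succ, show (n - k) + 1 = n + 1 - k by omega]
      _ = (∑ k ∈ Finset.range (n + 1 + 1),
            (n + 1).choose (k + 1) • ((fun u => z * u - u * z)^[k] x * z ^ (n + 1 - k)))
          + ∑ k ∈ Finset.range (n + 1 + 1),
            (n + 1).choose k • ((fun u => z * u - u * z)^[k] x * z ^ (n + 1 - k)) := by
          congr 1
          conv_rhs => rw [Finset.sum_range_succ]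
          rw [Nat.choose_succ_self, zero_smul, add_zero]
      _ = ∑ k ∈ Finset.range (n + 1 + 1),
            (n + 1 + 1).choose (k + 1) • ((fun u => z * u - u * z)^[k] x * z ^ (n + 1 - k)) := by
          rw [← Finset.sum_add_distrib]
          refine Finset.sum_congr rfl ?_
          intro k _
          rw [Nat.choose_succ_succ' (n + 1) k, add_smul, add_comm]

/-- Rank-one Jacobson formula in an arbitrary ring of characteristic `p`. -/
private lemma jacobson_rank_one {S : Type*} [Ring S] {p : ℕ} (hp : p.Prime) [CharP S p]
    (x y : S) (g : ℕ → S) (hg0 : g 0 = x)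
    (hgx : ∀ k, x * g k = g k * x)
    (hgy : ∀ k, y * g k - g k * y = g (k + 1)) :
    (x + y) ^ p = x ^ p + y ^ p + g (p - 1) := by
  classical
  haveI := Fact.mk hp
  obtain ⟨q, hq⟩ : ∃ q, p = q + 1 := ⟨p - 1, (Nat.succ_pred_eq_of_pos hp.pos).symm⟩
  set w : S[X] := C x * X + C y with hw
  have hdw : derivative w = C x := by
    simp [hw]
  have hpow : ∀ n : ℕ, derivative (w ^ n)
      = ∑ j ∈ Finset.range n, w ^ j * C x * w ^ (n - 1 - j) := by
    intro n
    induction n with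
    | zero => simp
    | succ n ih =>
      rw [pow_succ, derivative_mul, ih, hdw, Finset.sum_mul, Finset.sum_range_succ]
      congr 1
      · apply Finset.sum_congr rfl
        intro j hj
        rw [Finset.mem_range] at hj
        have : n + 1 - 1 - j = (n - 1 - j) + 1 := by omega
        rw [this, pow_succ, mul_assoc]
      · have : n + 1 - 1 - n = 0 := by omega
        rw [this, pow_zero, mul_one]
  have hcg : ∀ k : ℕ, (fun u => w * u - u * w)^[k] (C x) = C (g k) := by
    intro k
    induction k with
    | zero => rw [Function.iterate_zero_apply, hg0]
    | succ k ih =>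
      rw [Function.iterate_succ_apply', ih]
      show w * C (g k) - C (g k) * w = C (g (k + 1))
      calc w * C (g k) - C (g k) * w
          = C (x * g k) * X + C (y * g k) - (C (g k * x) * X + C (g k * y)) := by
            rw [hw, add_mul, mul_add, mul_assoc, X_mul, ← mul_assoc, ← C_mul, ← C_mul,
              ← mul_assoc, ← C_mul, ← C_mul]
        _ = C (g (k + 1)) := by
            rw [hgx k, ← hgy k, C_sub]
            abel
  have hq1 : p - 1 = q := by omega
  have hder : derivative (w ^ p) = C (g (p - 1)) := by
    rw [hq1, hpow p, hq]
    have e0 : ∀ j, q + 1 - 1 - j = q - j := fun j => by omega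
    rw [Finset.sum_congr rfl (fun j _ => by rw [e0 j])]
    rw [sum_conj_expand w (C x) q]
    rw [Finset.sum_eq_single q]
    · rw [Nat.choose_self, one_smul, hcg, Nat.sub_self, pow_zero, mul_one]
    · intro k hk hkq
      rw [Finset.mem_range] at hk
      have hdvd : p ∣ (q + 1).choose (k + 1) := by
        have hd : p ∣ p.choose (k + 1) := hp.dvd_choose_self (by omega) (by omega)
        rw [hq] at hd
        rw [hq]
        exact hd
      have hz : (((q + 1).choose (k + 1) : ℕ) : S[X]) = 0 := by
        rw [CharP.cast_eq_zero_iff S[X] p]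
        exact hdvd
      rw [nsmul_eq_mul, hz, zero_mul]
    · intro h
      exact absurd (Finset.mem_range.mpr (by omega)) h
  have hdegw : w.natDegree ≤ 1 := by
    refine le_trans (natDegree_add_le _ _) ?_
    simp only [max_le_iff]
    refine ⟨le_trans natDegree_mul_le ?_, by simp⟩
    simpa using natDegree_X_le
  have hdegP : (w ^ p).natDegree ≤ p := by
    refine le_trans natDegree_pow_le ?_
    calc p * w.natDegree ≤ p * 1 := Nat.mul_le_mul_left p hdegw
    _ = p := Nat.mul_one p
  have hc0 : (w ^ p).coeff 0 = y ^ p := by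
    have h := map_pow (constantCoeff (R := S)) w p
    have hcw : constantCoeff w = y := by simp [hw]
    have h2 : (w ^ p).coeff 0 = constantCoeff (w ^ p) := rfl
    rw [h2, h, hcw]
  have hder' : ∀ n : ℕ, (w ^ p).coeff (n + 1) * ((n : S) + 1) = (C (g (p - 1))).coeff n := by
    intro n
    rw [← hder, coeff_derivative]
  have hc1 : (w ^ p).coeff 1 = g (p - 1) := by
    have h := hder' 0
    simpa using h
  have hinv : ∀ (n : ℕ) (s : S), ¬ (p ∣ n) → s * (n : S) = 0 → s = 0 := by
    intro n s hnd h
    have hu : (n : ZMod p) ≠ 0 := by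
      rwa [Ne, ZMod.natCast_eq_zero_iff]
    have h1 : (n : S) * (ZMod.castHom dvd_rfl S) ((n : ZMod p)⁻¹) = 1 := by
      have hcast : (n : S) = (ZMod.castHom dvd_rfl S) ((n : ZMod p)) := by
        simp
      rw [hcast, ← map_mul, mul_inv_cancel₀ hu, map_one]
    calc s = s * ((n : S) * (ZMod.castHom dvd_rfl S) ((n : ZMod p)⁻¹)) := by rw [h1, mul_one]
    _ = (s * (n : S)) * (ZMod.castHom dvd_rfl S) ((n : ZMod p)⁻¹) := by rw [mul_assoc]
    _ = 0 := by rw [h, zero_mul]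
  have hcmid : ∀ j : ℕ, 2 ≤ j → j ≤ p - 1 → (w ^ p).coeff j = 0 := by
    intro j h2 hle
    obtain ⟨n, rfl⟩ : ∃ n, j = n + 1 := ⟨j - 1, by omega⟩
    have h := hder' n
    rw [coeff_C, if_neg (by omega : ¬ n = 0)] at h
    refine hinv (n + 1) _ ?_ ?_
    · intro hd
      have := Nat.le_of_dvd (by omega) hd
      omega
    · push_cast
      exact h
  have hctop : ∀ n : ℕ, (w ^ n).coeff n = x ^ n := by
    intro n
    induction n with
    | zero => simp
    | succ n ih =>
      rw [pow_succ, coeff_mul]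
      rw [Finset.sum_eq_single (n, 1)]
      · have hcw1 : w.coeff 1 = x := by simp [hw]
        rw [ih, hcw1, pow_succ]
      · rintro ⟨b1, b2⟩ hb hne
        rw [Finset.HasAntidiagonal.mem_antidiagonal] at hb
        simp only at hb ⊢
        rcases Nat.lt_or_ge b2 2 with hb2 | hb2
        · interval_cases b2
          · have hb1 : b1 = n + 1 := by omega
            subst hb1
            have hz : (w ^ n).coeff (n + 1) = 0 := by
              apply coeff_eq_zero_of_natDegree_lt
              have hdn : (w ^ n).natDegree ≤ n := by
                refine le_trans natDegree_pow_le ?_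
                calc n * w.natDegree ≤ n * 1 := Nat.mul_le_mul_left n hdegw
                _ = n := Nat.mul_one n
              omega
            rw [hz, zero_mul]
          · exact absurd (by rw [show b1 = n from by omega]) hne
        · have hz : w.coeff b2 = 0 :=
            coeff_eq_zero_of_natDegree_lt (lt_of_le_of_lt hdegw (by omega))
          rw [hz, mul_zero]
      · intro h
        exact absurd (Finset.HasAntidiagonal.mem_antidiagonal.mpr (by simp)) h
  have hchigh : ∀ j : ℕ, p < j → (w ^ p).coeff j = 0 :=
    fun j hj => coeff_eq_zero_of_natDegree_lt (lt_of_le_of_lt hdegP hj)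
  have hp0 : p ≠ 0 := hp.pos.ne'
  have hp1 : p ≠ 1 := hp.one_lt.ne'
  have hP : w ^ p = C (y ^ p) + C (g (p - 1)) * X + C (x ^ p) * X ^ p := by
    ext j
    simp only [coeff_add, coeff_C_mul, coeff_C, coeff_X, coeff_X_pow]
    rcases Nat.eq_zero_or_pos j with rfl | hj0
    · rw [hc0]
      rw [if_pos rfl, if_neg (by omega : ¬ (1 : ℕ) = 0), if_neg (by omega : ¬ (0 : ℕ) = p)]
      simp
    · rcases eq_or_ne j 1 with rfl | hj1
      · rw [hc1]
        rw [if_neg (by omega : ¬ (1 : ℕ) = 0), if_pos rfl, if_neg (by omega : ¬ (1 : ℕ) = p)]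
        simp
      · rcases eq_or_ne j p with rfl | hjp
        · rw [hctop]
          rw [if_neg (by omega : ¬ j = 0), if_neg (by omega : ¬ (1 : ℕ) = j), if_pos rfl]
          simp
        · rcases Nat.lt_or_ge j p with hlt | hge
          · rw [hcmid j (by omega) (by omega)]
            rw [if_neg (by omega : ¬ j = 0), if_neg (by omega : ¬ (1 : ℕ) = j), if_neg hjp]
            simp
          · rw [hchigh j (by omega)]
            rw [if_neg (by omega : ¬ j = 0), if_neg (by omega : ¬ (1 : ℕ) = j), if_neg hjp]
            simp
  set φ : S[X] →+* S := eval₂RingHom' (RingHom.id S) 1 (fun a => Commute.one_right a) with hφ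
  have hφC : ∀ a : S, φ (C a) = a := fun a => eval₂_C _ _
  have hφX : φ X = 1 := eval₂_X _ _
  have h1 : φ w = x + y := by
    rw [hw, map_add, map_mul, hφC, hφC, hφX, mul_one]
  have h2 : (x + y) ^ p = φ (w ^ p) := by rw [← h1, ← map_pow]
  rw [h2, hP, map_add, map_add, map_mul, map_mul, map_pow φ X p, hφC, hφC, hφC, hφX,
    mul_one, one_pow, mul_one]
  abel

/-- Rank-1 `p`-curvature formula: if `D` is a derivation of a commutative ring `A` of
characteristic `p`, `T ∈ A`, and `f ∈ A` satisfies `D^p = f·D` as additive operators,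
then the operator `(T + D)^p − f·T − D^p` (where `T + D` acts by `a ↦ T·a + D a`)
equals multiplication by `T^p + D^{p-1}(T) − f·T`. -/
theorem rank_one_p_curvature {A : Type*} [CommRing A] {p : ℕ} (hp : p.Prime) [CharP A p]
    (D : Derivation ℤ A A) (T f : A) (hf : ∀ a : A, (⇑D)^[p] a = f * D a) :
    ∀ a : A, (fun x => T * x + D x)^[p] a - f * T * a - (⇑D)^[p] a
      = (T ^ p + (⇑D)^[p - 1] T - f * T) * a := by
  intro a
  classical
  haveI : CharP (Module.End ℤ A) p := by
    constructor
    intro n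
    rw [← CharP.cast_eq_zero_iff A p n]
    constructor
    · intro h
      have h1 : ((n : Module.End ℤ A)) (1 : A) = 0 := by rw [h]; rfl
      rw [Module.End.natCast_apply] at h1
      simpa using h1
    · intro h
      ext b
      rw [Module.End.natCast_apply]
      simp [nsmul_eq_mul, h]
  set x : Module.End ℤ A := LinearMap.mulLeft ℤ T with hx
  set y : Module.End ℤ A := D.toLinearMap with hy
  set g : ℕ → Module.End ℤ A := fun k => LinearMap.mulLeft ℤ ((⇑D)^[k] T) with hg
  have hyapp : ∀ b : A, y b = D b := fun b => rfl
  have key : (x + y) ^ p = x ^ p + y ^ p + g (p - 1) := by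
    apply jacobson_rank_one hp x y g
    · simp [hg, hx]
    · intro k
      ext b
      simp only [Module.End.mul_apply, hx, hg, LinearMap.mulLeft_apply]
      ring
    · intro k
      ext b
      simp only [LinearMap.sub_apply, Module.End.mul_apply, hg, LinearMap.mulLeft_apply]
      rw [hyapp, hyapp, D.leibniz]
      rw [Function.iterate_succ_apply']
      simp only [smul_eq_mul]
      ring
  have e1 : (fun b => T * b + D b)^[p] a = ((x + y) ^ p) a := by
    rw [Module.End.pow_apply]
    congr 1
  have e2 : (⇑D)^[p] a = (y ^ p) a := by
    rw [Module.End.pow_apply]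
    rfl
  rw [e1, e2, key]
  simp only [LinearMap.add_apply]
  have e3 : (x ^ p) a = T ^ p * a := by
    rw [hx, LinearMap.pow_mulLeft, LinearMap.mulLeft_apply]
  have e4 : g (p - 1) a = (⇑D)^[p - 1] T * a := by
    rw [hg, LinearMap.mulLeft_apply]
  rw [e3, e4]
  ring
end

section
/- In characteristic 3, for the curve y² = x⁵ + a₁x⁴ + a₂x³ + a₃x² + a₄x + a₅ with derivation θ(x) = y, θ(y) = (1/2)g'(x), one has θ³ = f_{θ³}·θ with f_{θ³} = x³ + a₃. -/
open Polynomial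

/-- In characteristic 3, for the curve `y² = g(x) = x⁵ + a₁x⁴ + a₂x³ + a₃x² + a₄x + a₅`
with hyperelliptic derivation `θ x = y`, `θ y = (1/2)g'(x) = 2·g'(x)`, one has
`θ³ = f_{θ³}·θ` with `f_{θ³} = x³ + a₃`. -/
theorem ftheta_char_three {K : Type*} [Field K] [CharP K 3] (a₁ a₂ a₃ a₄ a₅ : K)
    {A : Type*} [CommRing A] [Algebra K A] (D : Derivation K A A) (x y : A)
    (hgen : Algebra.adjoin K {x, y} = ⊤)
    (hxy : y ^ 2 =
      aeval x (X ^ 5 + C a₁ * X ^ 4 + C a₂ * X ^ 3 + C a₃ * X ^ 2 + C a₄ * X + C a₅))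
    (hDx : D x = y)
    (hDy : D y = 2 * aeval x (derivative
      (X ^ 5 + C a₁ * X ^ 4 + C a₂ * X ^ 3 + C a₃ * X ^ 2 + C a₄ * X + C a₅))) :
    ∀ a : A, (⇑D)^[3] a = aeval x (X ^ 3 + C a₃) * D a := by
  have h3 : (3 : A) = 0 := by
    rw [show (3 : A) = algebraMap K A 3 from (map_ofNat _ 3).symm,
      show (3 : K) = 0 by exact_mod_cast CharP.cast_eq_zero K 3, map_zero]
  have hD2 : D (2 : A) = 0 := by
    rw [show (2 : A) = ((2 : ℕ) : A) by norm_num]; exact D.map_natCast 2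
  have hD3 : D (3 : A) = 0 := by
    rw [show (3 : A) = ((3 : ℕ) : A) by norm_num]; exact D.map_natCast 3
  have hD4 : D (4 : A) = 0 := by
    rw [show (4 : A) = ((4 : ℕ) : A) by norm_num]; exact D.map_natCast 4
  set f : A := aeval x (X ^ 3 + C a₃) with hf
  -- D³ - f•D is a derivation (char 3)
  let E : Derivation K A A :=
  { toFun := fun a => D (D (D a)) - f * D a
    map_add' := by intro a b; simp; ring
    map_smul' := by intro c a; simp [smul_sub, mul_comm]
    map_one_eq_zero' := by simp
    leibniz' := by
      intro a b
      show D (D (D (a * b))) - f * D (a * b) =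
        a • (D (D (D b)) - f * D b) + b • (D (D (D a)) - f * D a)
      simp only [Derivation.leibniz, map_add, smul_eq_mul]
      linear_combination (D a * D (D b) + D (D a) * D b) * h3 }
  have hE : ∀ a, E a = D (D (D a)) - f * D a := fun a => rfl
  -- simplify D y
  have hDy' : D y = 2 * (2 * x ^ 4 + algebraMap K A a₁ * x ^ 3 + algebraMap K A a₃ * (2 * x)
      + algebraMap K A a₄) := by
    rw [hDy]
    simp only [derivative_add, derivative_mul, derivative_C, derivative_X_pow, derivative_X,
      map_add, map_mul, map_pow, aeval_X, aeval_C, map_zero, map_one, map_natCast]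
    push_cast
    linear_combination (2 * x ^ 4 + 2 * algebraMap K A a₁ * x ^ 3
      + 2 * algebraMap K A a₂ * x ^ 2) * h3
  have hfx : f = x ^ 3 + algebraMap K A a₃ := by rw [hf]; simp
  have hEx : E x = 0 := by
    rw [hE, hDx, hDy']
    have : D (2 * (2 * x ^ 4 + algebraMap K A a₁ * x ^ 3 + algebraMap K A a₃ * (2 * x)
        + algebraMap K A a₄)) = 2 * (2 * (4 * x ^ 3 * D x) + algebraMap K A a₁ * (3 * x ^ 2 * D x)
        + algebraMap K A a₃ * (2 * D x)) := by
      simp only [Derivation.leibniz, Derivation.leibniz_pow, Derivation.map_algebraMap,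
        map_add, smul_eq_mul, nsmul_eq_mul, hD2, hD4, mul_zero, zero_mul, add_zero, zero_add]
      push_cast
      ring
    rw [this, hDx, hfx]
    linear_combination (5 * x ^ 3 + 2 * algebraMap K A a₁ * x ^ 2 + algebraMap K A a₃) * y * h3
  have hEy : E y = 0 := by
    rw [hE, hDy']
    have hD1 : D (2 * (2 * x ^ 4 + algebraMap K A a₁ * x ^ 3 + algebraMap K A a₃ * (2 * x)
        + algebraMap K A a₄)) = 2 * (2 * (4 * x ^ 3 * D x) + algebraMap K A a₁ * (3 * x ^ 2 * D x)
        + algebraMap K A a₃ * (2 * D x)) := by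
      simp only [Derivation.leibniz, Derivation.leibniz_pow, Derivation.map_algebraMap,
        map_add, smul_eq_mul, nsmul_eq_mul, hD2, hD4, mul_zero, zero_mul, add_zero, zero_add]
      push_cast
      ring
    rw [hD1, hDx]
    have hD2' : D (2 * (2 * (4 * x ^ 3 * y) + algebraMap K A a₁ * (3 * x ^ 2 * y)
        + algebraMap K A a₃ * (2 * y)))
        = 2 * (2 * (4 * (3 * x ^ 2 * D x * y + x ^ 3 * D y))
          + algebraMap K A a₁ * (3 * (2 * x * D x * y + x ^ 2 * D y))
          + algebraMap K A a₃ * (2 * D y)) := by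
      simp only [Derivation.leibniz, Derivation.leibniz_pow, Derivation.map_algebraMap,
        map_add, smul_eq_mul, nsmul_eq_mul, hD2, hD3, hD4, mul_zero, zero_mul, add_zero,
        zero_add]
      push_cast
      ring
    rw [hD2', hDx, hDy', hfx]
    linear_combination (16 * x ^ 2 * y ^ 2 + 4 * algebraMap K A a₁ * x * y ^ 2
      + (10 * x ^ 3 + 4 * algebraMap K A a₁ * x ^ 2 + 2 * algebraMap K A a₃)
        * (2 * x ^ 4 + algebraMap K A a₁ * x ^ 3 + algebraMap K A a₃ * (2 * x)
          + algebraMap K A a₄)) * h3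
  intro a
  have ha : a ∈ Algebra.adjoin K ({x, y} : Set A) := hgen ▸ Algebra.mem_top
  have h0 : E a = (0 : Derivation K A A) a := by
    refine Derivation.eqOn_adjoin ?_ ha
    intro z hz
    rcases hz with h | h
    · subst h; simpa using hEx
    · simp only [Set.mem_singleton_iff] at h; subst h; simpa using hEy
  simp only [Derivation.zero_apply] at h0
  have h1 := sub_eq_zero.mp (by rw [← hE]; exact h0)
  show D (D (D a)) = f * D a
  linear_combination h1
end

section
/- In characteristic 5, for the curve y² = g(x) = x⁵ + a₁x⁴ + a₂x³ + a₃x² + a₄x + a₅ with derivation θ(x) = y, one has θ⁵ = f_{θ⁵}·θ with f_{θ⁵} = 2a₁x⁵ + a₃² + 2a₂a₄ + 2a₁a₅. -/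
set_option maxRecDepth 8000

open Polynomial

namespace FthetaAux

noncomputable def gP {K : Type*} [CommRing K] (a₁ a₂ a₃ a₄ a₅ : K) : K[X] :=
  X ^ 5 + C a₁ * X ^ 4 + C a₂ * X ^ 3 + C a₃ * X ^ 2 + C a₄ * X + C a₅

noncomputable def q2P {K : Type*} [CommRing K] (a₁ a₂ a₃ a₄ a₅ : K) : K[X] :=
  C 3 * derivative (gP a₁ a₂ a₃ a₄ a₅)

noncomputable def q4P {K : Type*} [CommRing K] (a₁ a₂ a₃ a₄ a₅ : K) : K[X] :=
  derivative (derivative (q2P a₁ a₂ a₃ a₄ a₅)) * gP a₁ a₂ a₃ a₄ a₅ +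
    derivative (q2P a₁ a₂ a₃ a₄ a₅) * q2P a₁ a₂ a₃ a₄ a₅

noncomputable def fpP {K : Type*} [CommRing K] (a₁ a₂ a₃ a₄ a₅ : K) : K[X] :=
  C 2 * C a₁ * X ^ 5 + C (a₃ ^ 2 + 2 * a₂ * a₄ + 2 * a₁ * a₅)

end FthetaAux

open FthetaAux

/-- In characteristic 5, for the curve `y² = g(x) = x⁵ + a₁x⁴ + a₂x³ + a₃x² + a₄x + a₅`
with hyperelliptic derivation `θ x = y`, `θ y = (1/2)g'(x) = 3·g'(x)`, one has
`θ⁵ = f_{θ⁵}·θ` with `f_{θ⁵} = 2a₁x⁵ + a₃² + 2a₂a₄ + 2a₁a₅`. -/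
theorem ftheta_char_five {K : Type*} [Field K] [CharP K 5] (a₁ a₂ a₃ a₄ a₅ : K)
    {A : Type*} [CommRing A] [Algebra K A] (D : Derivation K A A) (x y : A)
    (hgen : Algebra.adjoin K {x, y} = ⊤)
    (hxy : y ^ 2 =
      aeval x (X ^ 5 + C a₁ * X ^ 4 + C a₂ * X ^ 3 + C a₃ * X ^ 2 + C a₄ * X + C a₅))
    (hDx : D x = y)
    (hDy : D y = 3 * aeval x (derivative
      (X ^ 5 + C a₁ * X ^ 4 + C a₂ * X ^ 3 + C a₃ * X ^ 2 + C a₄ * X + C a₅))) :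
    ∀ a : A, (⇑D)^[5] a =
      aeval x (C 2 * C a₁ * X ^ 5 + C (a₃ ^ 2 + 2 * a₂ * a₄ + 2 * a₁ * a₅)) * D a := by
  have hxy' : y ^ 2 = aeval x (gP a₁ a₂ a₃ a₄ a₅) := hxy
  have h5 : (5 : A) = 0 := by
    have h5K : (5 : K) = 0 := by exact_mod_cast CharP.cast_eq_zero K 5
    rw [show (5 : A) = algebraMap K A 5 from (map_ofNat _ 5).symm, h5K, map_zero]
  have s1 : ∀ p : K[X], D (aeval x p) = aeval x (derivative p) * y := by
    intro p; rw [D.map_aeval, smul_eq_mul, hDx]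
  have h2 : D y = aeval x (q2P a₁ a₂ a₃ a₄ a₅) := by
    rw [hDy]
    show 3 * aeval x (derivative (gP a₁ a₂ a₃ a₄ a₅)) = _
    unfold q2P
    rw [map_mul, aeval_C, map_ofNat]
  have h3 : D (D y) = aeval x (derivative (q2P a₁ a₂ a₃ a₄ a₅)) * y := by rw [h2, s1]
  have h4 : D (D (D y)) = aeval x (q4P a₁ a₂ a₃ a₄ a₅) := by
    rw [h3, D.leibniz, smul_eq_mul, smul_eq_mul, h2, s1]
    unfold q4P
    rw [map_add, map_mul, map_mul]
    linear_combination aeval x (derivative (derivative (q2P a₁ a₂ a₃ a₄ a₅))) * hxy'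
  have hfin : aeval x (derivative (q4P a₁ a₂ a₃ a₄ a₅)) = aeval x (fpP a₁ a₂ a₃ a₄ a₅) := by
    simp only [q4P, q2P, gP, fpP, derivative_add, derivative_mul, derivative_C,
      derivative_X, derivative_X_pow, derivative_pow, derivative_ofNat, derivative_natCast,
      derivative_one, map_add, map_mul, map_pow, aeval_X, aeval_C,
      map_ofNat, Nat.cast_ofNat, map_natCast, map_one, mul_one, one_mul, mul_zero, zero_mul,
      add_zero, zero_add, Nat.cast_one]
    linear_combination (7*(algebraMap K A a₃)^2 + 14*(algebraMap K A a₂)*(algebraMap K A a₄)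
      + 14*(algebraMap K A a₁)*(algebraMap K A a₅)
      + 72*x*(algebraMap K A a₅) + 72*x*(algebraMap K A a₂)*(algebraMap K A a₃)
      + 72*x*(algebraMap K A a₁)*(algebraMap K A a₄)
      + 216*x^2*(algebraMap K A a₄) + 108*x^2*(algebraMap K A a₂)^2
      + 216*x^2*(algebraMap K A a₁)*(algebraMap K A a₃)
      + 504*x^3*(algebraMap K A a₃) + 504*x^3*(algebraMap K A a₁)*(algebraMap K A a₂)
      + 1008*x^4*(algebraMap K A a₂) + 504*x^4*(algebraMap K A a₁)^2
      + 1814*x^5*(algebraMap K A a₁) + 1512*x^6) * h5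
  have hx5 : D (D (D (D (D x)))) = aeval x (fpP a₁ a₂ a₃ a₄ a₅) * D x := by
    rw [hDx, h4, s1, hfin]
  have hc : D (aeval x (fpP a₁ a₂ a₃ a₄ a₅)) = 0 := by
    rw [s1]
    simp only [fpP, derivative_add, derivative_mul, derivative_C, derivative_X, derivative_X_pow,
      derivative_pow, derivative_ofNat, derivative_natCast, derivative_one,
      map_add, map_mul, map_pow, aeval_X, aeval_C, map_ofNat, Nat.cast_ofNat, map_natCast,
      map_one, mul_one, one_mul, zero_mul, mul_zero, add_zero, zero_add, Nat.cast_one]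
    linear_combination (2 * algebraMap K A a₁ * x ^ 4 * y) * h5
  have hy5 : D (D (D (D (D y)))) = aeval x (fpP a₁ a₂ a₃ a₄ a₅) * D y := by
    rw [← hDx]
    calc D (D (D (D (D (D x))))) = D (aeval x (fpP a₁ a₂ a₃ a₄ a₅) * D x) := by rw [hx5]
    _ = aeval x (fpP a₁ a₂ a₃ a₄ a₅) * D (D x) + D x * D (aeval x (fpP a₁ a₂ a₃ a₄ a₅)) := by
        rw [D.leibniz, smul_eq_mul, smul_eq_mul]
    _ = aeval x (fpP a₁ a₂ a₃ a₄ a₅) * D (D x) := by rw [hc, mul_zero, add_zero]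
  have key : ∀ a ∈ Algebra.adjoin K {x, y},
      D (D (D (D (D a)))) = aeval x (fpP a₁ a₂ a₃ a₄ a₅) * D a := by
    intro a ha
    induction ha using Algebra.adjoin_induction with
    | mem z hz =>
        simp only [Set.mem_insert_iff, Set.mem_singleton_iff] at hz
        rcases hz with rfl | rfl
        · exact hx5
        · exact hy5
    | algebraMap r => simp [Derivation.map_algebraMap]
    | add u v _ _ hu hv => simp only [map_add, hu, hv]; ring
    | mul u v _ _ hu hv =>
        have hexp : D (D (D (D (D (u * v))))) = u * D (D (D (D (D v)))) +
            v * D (D (D (D (D u)))) := by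
          simp only [Derivation.leibniz, smul_eq_mul, map_add]
          linear_combination (D u * D (D (D (D v))) + 2 * (D (D u) * D (D (D v)))
            + 2 * (D (D (D u)) * D (D v)) + D (D (D (D u))) * D v) * h5
        rw [hexp, hu, hv, D.leibniz, smul_eq_mul, smul_eq_mul]; ring
  intro a
  show D (D (D (D (D a)))) = aeval x (fpP a₁ a₂ a₃ a₄ a₅) * D a
  exact key a (by rw [hgen]; trivial)
end

section
/- Let p be an odd prime and let g₅ mean g_p(x) = θ^{p-1}(x) for the hyperelliptic derivation on y² = g(x) with deg g = 5. Then deg g_p < 2p, and the only possibly nonzero coefficients of g_p modulo p are in degrees 0, 1, p, and p+1. -/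
/-!
Model `K[x, y]/(y² - g)` by pairs `(a, b) ↔ a(x) + b(x) y`, on which `θ` is a derivation with
`θ^{2k}(x) = g_{2k+1}(x)`. In characteristic `p` the Leibniz expansion of `θ^p` has no middle
terms, so `θ^p` is again a derivation; on `K[x]` it is `f ↦ f'(x) g_p'(x) y`. Applying `θ^p` to
`y² = g` gives `2 y θ^p(y) = g' g_p' y`, and `θ^p(y) = g_{p+2} = g_p'' g + g_p' g'/2`, whence
`g_p'' g = 0`. So `d (d - 1) c_d = 0` for every coefficient `c_d` of `g_p`, while the recursion
gives `deg g_{2m+1} ≤ 3m + 1 < 2p`.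
-/

open Polynomial

/-- The polynomials `g_k` for odd `k = 2m+1`: `g₁ = x` and
`g_k = g''_{k-2}·g + (1/2)·g'_{k-2}·g'`.  Here `hyperGk g m` is `g_{2m+1}`;
in particular `g_p = hyperGk g ((p-1)/2)`. -/
noncomputable def hyperGk {K : Type*} [Field K] (g : K[X]) : ℕ → K[X]
  | 0 => X
  | m + 1 =>
      derivative (derivative (hyperGk g m)) * g
        + Polynomial.C (2⁻¹ : K) * derivative (hyperGk g m) * derivative g

section Leibniz

open Finset

variable {R M : Type*} [CommSemiring R] [AddCommMonoid M] [Module R M]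
  {μ : M →ₗ[R] M →ₗ[R] M} {T : M →ₗ[R] M}

theorem LinearMap.iterate_apply_bilin_of_leibniz
    (hT : ∀ u v, T (μ u v) = μ (T u) v + μ u (T v)) (n : ℕ) (u v : M) :
    T^[n] (μ u v) = ∑ ij ∈ antidiagonal n, n.choose ij.1 • μ (T^[ij.1] u) (T^[ij.2] v) := by
  induction n with
  | zero => simp
  | succ n ih =>
    rw [sum_antidiagonal_choose_succ_nsmul (fun i j => μ (T^[i] u) (T^[j] v)) n]
    simp only [Function.iterate_succ_apply', ih, map_sum, map_nsmul, hT, smul_add,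
      sum_add_distrib]
    rw [add_comm]
    congr 1
    refine sum_congr rfl fun ⟨i, j⟩ hij => ?_
    rw [n.choose_symm_of_eq_add (mem_antidiagonal.1 hij).symm]

theorem LinearMap.iterate_char_apply_bilin_of_leibniz {p : ℕ} [CharP R p] (hp : p.Prime)
    (hT : ∀ u v, T (μ u v) = μ (T u) v + μ u (T v)) (u v : M) :
    T^[p] (μ u v) = μ (T^[p] u) v + μ u (T^[p] v) := by
  rw [iterate_apply_bilin_of_leibniz hT,
    sum_eq_add (p, 0) (0, p) (by simp [hp.ne_zero]) ?_ (by simp) (by simp)]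
  · simp
  rintro ⟨i, j⟩ hij ⟨hi, hj⟩
  obtain hij : i + j = p := by simpa using hij
  simp only [ne_eq, Prod.mk.injEq] at hi hj
  rw [← Nat.cast_smul_eq_nsmul R, (CharP.cast_eq_zero_iff R p _).2
    (hp.dvd_choose_self (by omega) (by omega)), zero_smul]

end Leibniz

namespace Polynomial

variable {R : Type*} [CommRing R]

lemma natDegree_derivative_derivative_mul_le (f g : R[X]) :
    (derivative (derivative f) * g).natDegree ≤ f.natDegree + g.natDegree - 2 := by
  by_cases hf : f.natDegree < 2
  · have hf'' : derivative (derivative f) = 0 := iterate_derivative_eq_zero hf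
    simp [hf'']
  · have hf'' : (derivative (derivative f)).natDegree ≤ f.natDegree - 2 :=
      natDegree_iterate_derivative f 2
    exact natDegree_mul_le.trans (by omega)

lemma coeff_eq_zero_of_derivative_derivative_eq_zero [IsDomain R] {p : ℕ} [CharP R p]
    {f : R[X]} (hf : derivative (derivative f) = 0) {d : ℕ} (hd : ¬p ∣ d)
    (hd' : ¬p ∣ d - 1) : f.coeff d = 0 := by
  have hd0 : d ≠ 0 := by rintro rfl; exact hd (dvd_zero p)
  have hd1 : d ≠ 1 := by rintro rfl; exact hd' (dvd_zero p)
  obtain ⟨e, rfl⟩ : ∃ e, d = e + 2 := ⟨d - 2, by omega⟩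
  have he := congrArg (coeff · e) hf
  simp only [coeff_derivative, coeff_zero] at he
  have h1 : (e : R) + 1 ≠ 0 := by
    exact_mod_cast (CharP.cast_eq_zero_iff R p (e + 1)).not.2 hd'
  have h2 : ((e + 1 : ℕ) : R) + 1 ≠ 0 := by
    exact_mod_cast (CharP.cast_eq_zero_iff R p (e + 2)).not.2 hd
  simpa only [mul_eq_zero, h1, h2, or_false] using he

end Polynomial

lemma natDegree_hyperGk_le {K : Type*} [Field K] {g : K[X]} (hg : g.natDegree ≤ 5) (m : ℕ) :
    (hyperGk g m).natDegree ≤ 3 * m + 1 := by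
  induction m with
  | zero => simp [hyperGk]
  | succ m ih =>
    refine natDegree_add_le_of_degree_le ((natDegree_derivative_derivative_mul_le _ _).trans
      (by omega)) (natDegree_mul_le.trans ?_)
    have hG' := natDegree_derivative_le (hyperGk g m)
    have hg' := natDegree_derivative_le g
    grw [natDegree_C_mul_le]
    omega

lemma two_ne_zero_of_charP_odd (K : Type*) [Field K] (m : ℕ) [CharP K (2 * m + 1)] :
    (2 : K) ≠ 0 :=
  Ring.two_ne_zero (by rw [ringChar.eq K (2 * m + 1)]; omega)

namespace Hyperelliptic

section Theta

variable {K : Type*} [Field K] (g : K[X])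

/-- `(a, b)` stands for `a(x) + b(x) y` in `K[x, y]/(y² - g(x))`. -/
noncomputable def pairMul : K[X] × K[X] →ₗ[K] K[X] × K[X] →ₗ[K] K[X] × K[X] :=
  LinearMap.mk₂ K (fun u v => (u.1 * v.1 + u.2 * v.2 * g, u.1 * v.2 + u.2 * v.1))
    (fun _ _ _ => by
      simp only [Prod.fst_add, Prod.snd_add, Prod.mk_add_mk]; congr 1 <;> ring)
    (fun _ _ _ => by
      simp only [Prod.smul_fst, Prod.smul_snd, Prod.smul_mk, smul_eq_C_mul]; congr 1 <;> ring)
    (fun _ _ _ => by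
      simp only [Prod.fst_add, Prod.snd_add, Prod.mk_add_mk]; congr 1 <;> ring)
    (fun _ _ _ => by
      simp only [Prod.smul_fst, Prod.smul_snd, Prod.smul_mk, smul_eq_C_mul]; congr 1 <;> ring)

@[simp]
lemma pairMul_apply (u v : K[X] × K[X]) :
    pairMul g u v = (u.1 * v.1 + u.2 * v.2 * g, u.1 * v.2 + u.2 * v.1) := rfl

/-- `θ x = y` and `θ y = g'(x)/2`, in the coordinates of `pairMul`. -/
noncomputable def theta : K[X] × K[X] →ₗ[K] K[X] × K[X] where
  toFun u := (derivative u.2 * g + C 2⁻¹ * u.2 * derivative g, derivative u.1)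
  map_add' u v := by
    simp only [Prod.fst_add, Prod.snd_add, derivative_add, Prod.mk_add_mk]
    congr 1; ring
  map_smul' c u := by
    simp only [Prod.smul_fst, Prod.smul_snd, Prod.smul_mk, smul_eq_C_mul, derivative_C_mul,
      RingHom.id_apply]
    congr 1; ring

@[simp]
lemma theta_apply (u : K[X] × K[X]) :
    theta g u = (derivative u.2 * g + C 2⁻¹ * u.2 * derivative g, derivative u.1) := rfl

lemma theta_pairMul (h2 : (2 : K) ≠ 0) (u v : K[X] × K[X]) :
    theta g (pairMul g u v) = pairMul g (theta g u) v + pairMul g u (theta g v) := by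
  have half : C (2⁻¹ : K) + C 2⁻¹ = 1 := by
    rw [← C_add, ← two_mul, mul_inv_cancel₀ h2, C_1]
  simp only [theta_apply, pairMul_apply, derivative_add, derivative_mul, Prod.mk_add_mk]
  congr 1
  · ring
  · linear_combination -(u.2 * v.2 * derivative g) * half

noncomputable def thetaSq (f : K[X]) : K[X] :=
  derivative (derivative f) * g + C 2⁻¹ * derivative f * derivative g

lemma hyperGk_eq_iterate_thetaSq (m : ℕ) : hyperGk g m = (thetaSq g)^[m] X := by
  induction m with
  | zero => rfl
  | succ m ih => rw [Function.iterate_succ_apply', ← ih]; rfl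

lemma theta_iterate_two_mul (k : ℕ) (f : K[X]) :
    (theta g)^[2 * k] (f, 0) = ((thetaSq g)^[k] f, 0) := by
  induction k with
  | zero => rfl
  | succ k ih =>
    rw [mul_add_one, add_comm, Function.iterate_add_apply, ih,
      Function.iterate_succ_apply' (thetaSq g)]
    simp [thetaSq]

lemma theta_iterate_two_mul_add_one (k : ℕ) (f : K[X]) :
    (theta g)^[2 * k + 1] (f, 0) = (0, derivative ((thetaSq g)^[k] f)) := by
  rw [Function.iterate_succ_apply', theta_iterate_two_mul]
  simp

lemma theta_iterate_two_mul_add_one_y (k : ℕ) :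
    (theta g)^[2 * k + 1] (0, 1) = (hyperGk g (k + 1), 0) := by
  have hy : ((0, 1) : K[X] × K[X]) = theta g (X, 0) := by simp
  rw [hy, ← Function.iterate_succ_apply, show (2 * k + 1).succ = 2 * (k + 1) by omega,
    theta_iterate_two_mul, hyperGk_eq_iterate_thetaSq]

end Theta

section CharP

variable {K : Type*} [Field K] {g : K[X]} {m : ℕ} [CharP K (2 * m + 1)]

variable (g) in
/-- `θ^p` maps `K[x]` into `K[x] y`; in characteristic `p = 2m + 1` the `y`-coefficient is a
derivation of `K[x]`. -/
noncomputable def thetaPowDerivation (hp : (2 * m + 1).Prime) : Derivation K K[X] K[X] :=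
  Derivation.mk'
    (LinearMap.snd K K[X] K[X] ∘ₗ (theta g ^ (2 * m + 1)) ∘ₗ LinearMap.inl K K[X] K[X])
    fun f h => by
      have hmul : ((f * h, 0) : K[X] × K[X]) = pairMul g (f, 0) (h, 0) := by simp
      simp only [LinearMap.coe_comp, Function.comp_apply, LinearMap.inl_apply,
        LinearMap.snd_apply, Module.End.pow_apply]
      rw [hmul, LinearMap.iterate_char_apply_bilin_of_leibniz hp
          (theta_pairMul g (two_ne_zero_of_charP_odd K m)),
        theta_iterate_two_mul_add_one, theta_iterate_two_mul_add_one]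
      simp only [pairMul_apply, Prod.snd_add, smul_eq_mul]
      ring

lemma thetaPowDerivation_apply (hp : (2 * m + 1).Prime) (f : K[X]) :
    thetaPowDerivation g hp f = derivative ((thetaSq g)^[m] f) := by
  simp [thetaPowDerivation, Module.End.pow_apply, theta_iterate_two_mul_add_one]

lemma thetaPowDerivation_eq_derivative_mul (hp : (2 * m + 1).Prime) (f : K[X]) :
    thetaPowDerivation g hp f = derivative f * derivative (hyperGk g m) :=
  calc thetaPowDerivation g hp f = thetaPowDerivation g hp (aeval X f) := by
        rw [aeval_X_left_apply]
    _ = derivative f * thetaPowDerivation g hp X := by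
        rw [Derivation.map_aeval, aeval_X_left_apply, smul_eq_mul]
    _ = derivative f * derivative (hyperGk g m) := by
        rw [thetaPowDerivation_apply, hyperGk_eq_iterate_thetaSq]

theorem derivative_derivative_hyperGk_eq_zero (hp : (2 * m + 1).Prime) (hg : g ≠ 0) :
    derivative (derivative (hyperGk g m)) = 0 := by
  have h2 := two_ne_zero_of_charP_odd K m
  have hθp := LinearMap.iterate_char_apply_bilin_of_leibniz hp (theta_pairMul g h2) (0, 1) (0, 1)
  have hyy : pairMul g (0, 1) (0, 1) = (g, 0) := by simp
  rw [hyy, theta_iterate_two_mul_add_one_y, theta_iterate_two_mul_add_one,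
    ← thetaPowDerivation_apply hp, thetaPowDerivation_eq_derivative_mul] at hθp
  have key : 2 * derivative (derivative (hyperGk g m)) * g = 0 := by
    have hsnd := congrArg Prod.snd hθp
    simp only [pairMul_apply, hyperGk, Prod.snd_add] at hsnd
    have half : (2 : K[X]) * C 2⁻¹ = 1 := by
      rw [← C_ofNat, ← C_mul, mul_inv_cancel₀ h2, C_1]
    linear_combination -hsnd - derivative (hyperGk g m) * derivative g * half
  have h2X : (2 : K[X]) ≠ 0 := by rw [← C_ofNat]; exact C_ne_zero.2 h2
  simpa [h2X, hg] using key

end CharP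

end Hyperelliptic

theorem gp_degree_and_coeffs_general {K : Type*} [Field K] {p : ℕ} (hp : p.Prime) (hodd : Odd p)
    [CharP K p] (g : K[X]) (hdeg : g.natDegree = 5) :
    (hyperGk g ((p - 1) / 2)).natDegree < 2 * p ∧
    ∀ d : ℕ, d ≠ 0 → d ≠ 1 → d ≠ p → d ≠ p + 1 →
      (hyperGk g ((p - 1) / 2)).coeff d = 0 := by
  obtain ⟨m, rfl⟩ := hodd
  rw [show (2 * m + 1 - 1) / 2 = m by omega]
  have hlt : (hyperGk g m).natDegree < 2 * (2 * m + 1) :=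
    (natDegree_hyperGk_le hdeg.le m).trans_lt (by omega)
  have hg : g ≠ 0 := ne_zero_of_natDegree_gt (n := 0) (by omega)
  refine ⟨hlt, fun d h0 h1 hdp hdp1 => ?_⟩
  rcases lt_or_ge (hyperGk g m).natDegree d with hd | hd
  · exact coeff_eq_zero_of_natDegree_lt hd
  refine coeff_eq_zero_of_derivative_derivative_eq_zero
    (Hyperelliptic.derivative_derivative_hyperGk_eq_zero hp hg) (fun h => hdp ?_) (fun h => hdp1 ?_)
  · exact Nat.eq_of_dvd_of_lt_two_mul h0 h (by omega)
  · have := Nat.eq_of_dvd_of_lt_two_mul (by omega) h (by omega)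
    omega

/-- For `p` an odd prime and `g` a (monic) quintic over a field of characteristic `p`,
the polynomial `g_p = θ^{p-1}(x)` has degree `< 2p`, and its only possibly nonzero
coefficients are in degrees `0`, `1`, `p`, and `p+1`. -/
theorem gp_degree_and_coeffs {K : Type*} [Field K] {p : ℕ} (hp : p.Prime) (hodd : Odd p)
    [CharP K p] (g : K[X]) (hg : g.Monic) (hdeg : g.natDegree = 5) :
    (hyperGk g ((p - 1) / 2)).natDegree < 2 * p ∧
    ∀ d : ℕ, d ≠ 0 → d ≠ 1 → d ≠ p → d ≠ p + 1 →
      (hyperGk g ((p - 1) / 2)).coeff d = 0 :=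
  gp_degree_and_coeffs_general hp hodd g hdeg
end

section
/- In characteristic 3, the system of equations in (c₁,c₂) ∈ k²: c₁³ + c₂h₁ − c₁h₂ = 0 and c₂³ + c₂h₃ − c₁h₄ = 0, where h₁ = −a₄, h₂ = a₃, h₃ = −a₁, h₄ = 1 (the coefficients of g₃(x) = x⁴ − a₁x³ + a₃x − a₄ in degrees 0, 1, 3, 4), has exactly 9 solutions over an algebraically closed field k if and only if a₄ − a₁a₃ ≠ 0. -/
/-!
Solving the second equation for `c₁ = c₂³ - a₁c₂` identifies the solutions with the roots of
the additive polynomial `y⁹ - (a₁³ + a₃)y³ + (a₁a₃ - a₄)y`, since in characteristic 3 the cube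
`(y³ - a₁y)³` is `y⁹ - a₁³y³`. Over an algebraically closed field a polynomial of degree 9 has
9 distinct roots iff it is separable, and the derivative of this one is the constant
`a₁a₃ - a₄`.
-/

open Polynomial

namespace Polynomial

variable {k : Type*} [Field k]

theorem setOf_isRoot_eq_coe_roots_toFinset [DecidableEq k] {p : k[X]} (hp : p ≠ 0) :
    {x | p.IsRoot x} = (p.roots.toFinset : Set k) := by
  ext x
  simp [mem_roots hp]

theorem card_roots_toFinset_eq_natDegree_iff_separable [IsAlgClosed k] [DecidableEq k]
    {p : k[X]} (hp : p ≠ 0) :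
    p.roots.toFinset.card = p.natDegree ↔ p.Separable := by
  rw [← IsAlgClosed.card_roots_eq_natDegree, Multiset.toFinset_card_eq_card_iff_nodup,
    nodup_roots_iff_of_splits hp (IsAlgClosed.splits p)]

theorem separable_iff_of_derivative_eq_C {p : k[X]} {d : k} (hp : 0 < p.natDegree)
    (hd : derivative p = C d) : p.Separable ↔ d ≠ 0 := by
  rw [separable_def, hd]
  constructor
  · rintro hcop rfl
    rw [C_0, isCoprime_zero_right] at hcop
    exact (natDegree_eq_zero_of_isUnit hcop).not_gt hp
  · intro hd0
    simpa using (isCoprime_mul_unit_left_right (isUnit_C.mpr hd0.isUnit) p 1).mpr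
      isCoprime_one_right

end Polynomial

section CharThree

variable {k : Type*} [Field k] (a₁ a₃ a₄ : k)

noncomputable def prankEliminant : k[X] :=
  X ^ 9 - C (a₁ ^ 3 + a₃) * X ^ 3 + C (a₁ * a₃ - a₄) * X

theorem natDegree_prankEliminant : (prankEliminant a₁ a₃ a₄).natDegree = 9 := by
  unfold prankEliminant
  compute_degree!

theorem prankEliminant_ne_zero : prankEliminant a₁ a₃ a₄ ≠ 0 :=
  ne_zero_of_natDegree_gt (n := 0) (by rw [natDegree_prankEliminant]; norm_num)

variable [CharP k 3]

theorem derivative_prankEliminant :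
    derivative (prankEliminant a₁ a₃ a₄) = C (a₁ * a₃ - a₄) := by
  have h3 : (3 : k) = 0 := CharP.cast_eq_zero k 3
  have h9 : (9 : k) = 0 := by linear_combination 3 * h3
  simp [prankEliminant, derivative_pow, h3, h9]

theorem eval_prankEliminant (y : k) :
    (prankEliminant a₁ a₃ a₄).eval y =
      (y ^ 3 - a₁ * y) ^ 3 + y * (-a₄) - (y ^ 3 - a₁ * y) * a₃ := by
  rw [sub_pow_char]
  simp only [prankEliminant, eval_add, eval_sub, eval_mul, eval_pow, eval_C, eval_X]
  ring

theorem prank_solutions_eq_image :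
    {c : k × k | c.1 ^ 3 + c.2 * (-a₄) - c.1 * a₃ = 0 ∧ c.2 ^ 3 + c.2 * (-a₁) - c.1 * 1 = 0} =
      (fun y => (y ^ 3 - a₁ * y, y)) '' {y | (prankEliminant a₁ a₃ a₄).IsRoot y} := by
  ext ⟨c₁, c₂⟩
  simp only [Set.mem_ofPred_eq, Set.mem_image, Prod.mk.injEq, IsRoot.def, eval_prankEliminant]
  constructor
  · rintro ⟨h₁, h₂⟩
    obtain rfl : c₁ = c₂ ^ 3 - a₁ * c₂ := by linear_combination -h₂
    exact ⟨c₂, h₁, rfl, rfl⟩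
  · rintro ⟨y, hy, rfl, rfl⟩
    exact ⟨hy, by ring⟩

end CharThree

/-- Characteristic-3 `p`-rank computation: over an algebraically closed field of
characteristic 3, the system `c₁³ + c₂h₁ − c₁h₂ = 0`, `c₂³ + c₂h₃ − c₁h₄ = 0` with
`h₁ = −a₄`, `h₂ = a₃`, `h₃ = −a₁`, `h₄ = 1` has exactly 9 solutions iff
`a₄ − a₁a₃ ≠ 0`. -/
theorem char_three_prank_count {k : Type*} [Field k] [IsAlgClosed k] [CharP k 3]
    (a₁ a₃ a₄ : k) :
    {c : k × k | c.1 ^ 3 + c.2 * (-a₄) - c.1 * a₃ = 0 ∧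
        c.2 ^ 3 + c.2 * (-a₁) - c.1 * 1 = 0}.ncard = 9 ↔ a₄ - a₁ * a₃ ≠ 0 := by
  classical
  have hne := prankEliminant_ne_zero a₁ a₃ a₄
  have hcount := card_roots_toFinset_eq_natDegree_iff_separable hne
  rw [natDegree_prankEliminant] at hcount
  rw [prank_solutions_eq_image,
    Set.ncard_image_of_injective _ (Function.LeftInverse.injective (g := Prod.snd) fun _ => rfl),
    setOf_isRoot_eq_coe_roots_toFinset hne, Set.ncard_coe_finset, hcount,
    separable_iff_of_derivative_eq_C (by rw [natDegree_prankEliminant]; norm_num)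
      (derivative_prankEliminant a₁ a₃ a₄),
    sub_ne_zero, sub_ne_zero, ne_comm]
end

section
/- Over an algebraically closed field k of characteristic p, for h₁,h₂,h₃,h₄ ∈ k with h₄ ≠ 0, the number of solutions (c₁,c₂) ∈ k² to the system c₁^p + c₂h₁ − c₁h₂ = 0, c₂^p + c₂h₃ − c₁h₄ = 0 is: p² if h₁h₄ − h₂h₃ ≠ 0; p if h₁h₄ − h₂h₃ = 0 but h₃^p − h₂h₄^{p-1} ≠ 0; and 1 if h₁h₄ − h₂h₃ = h₃^p − h₂h₄^{p-1} = 0. -/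
/-!
The second equation is linear in `c₁`, so it determines `c₁ = (c₂ ^ p + c₂ h₃) / h₄`; substituting
into the first and multiplying by `h₄ ^ p` leaves the additive polynomial equation
`c₂ ^ p² + A c₂ ^ p + B c₂ = 0` with `A = h₃ ^ p - h₂ h₄ ^ (p - 1)` and
`B = (h₁ h₄ - h₂ h₃) h₄ ^ (p - 1)`. Its derivative is the constant `B`, so for `B ≠ 0` it has `p²`
distinct roots. For `B = 0, A ≠ 0` it is the `p`-th power of `c₂ ^ p + a c₂` with `a ^ p = A`, which has `p`
distinct roots, and for `A = B = 0` only `c₂ = 0` remains.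
-/

open Polynomial

theorem Polynomial.separable_of_derivative_eq_C {k : Type*} [Field k] {P : k[X]} {b : k}
    (hb : b ≠ 0) (h : derivative P = C b) : P.Separable :=
  ⟨0, C b⁻¹, by rw [h, zero_mul, zero_add, ← C_mul, inv_mul_cancel₀ hb, C_1]⟩

theorem Polynomial.ncard_setOf_isRoot_eq_natDegree {k : Type*} [Field k] [IsAlgClosed k]
    {P : k[X]} (h : P.Separable) : {x | P.IsRoot x}.ncard = P.natDegree := by
  classical
  have hroots : {x | P.IsRoot x} = (P.roots.toFinset : Set k) := by
    ext x; simp [h.ne_zero]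
  rw [hroots, Set.ncard_coe_finset, Multiset.toFinset_card_of_nodup (nodup_roots h),
    IsAlgClosed.card_roots_eq_natDegree]

section AdditivePolynomial

variable {k : Type*} [Field k] [IsAlgClosed k] {p : ℕ} [Fact p.Prime] [CharP k p]

theorem ncard_setOf_pow_add_mul_eq_zero {a : k} (ha : a ≠ 0) :
    {x : k | x ^ p + a * x = 0}.ncard = p := by
  have hp := (Fact.out : p.Prime).one_lt
  have hsep : (X ^ p + C a * X).Separable :=
    separable_of_derivative_eq_C ha (by simp [derivative_X_pow])
  calc {x : k | x ^ p + a * x = 0}.ncard = {x | (X ^ p + C a * X).IsRoot x}.ncard := by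
        simp [IsRoot]
    _ = p := by
      rw [ncard_setOf_isRoot_eq_natDegree hsep]
      compute_degree!
      all_goals first | omega | simp [hp.ne']

theorem ncard_setOf_pow_sq_add_mul_eq_zero (A : k) {B : k} (hB : B ≠ 0) :
    {x : k | x ^ p ^ 2 + A * x ^ p + B * x = 0}.ncard = p ^ 2 := by
  have hp := (Fact.out : p.Prime).one_lt
  have hp2 : p < p ^ 2 := by nlinarith
  have hsep : (X ^ p ^ 2 + C A * X ^ p + C B * X).Separable :=
    separable_of_derivative_eq_C hB (by simp [derivative_X_pow])
  calc {x : k | x ^ p ^ 2 + A * x ^ p + B * x = 0}.ncard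
      = {x | (X ^ p ^ 2 + C A * X ^ p + C B * X).IsRoot x}.ncard := by simp [IsRoot]
    _ = p ^ 2 := by
      rw [ncard_setOf_isRoot_eq_natDegree hsep]
      compute_degree!
      all_goals first | omega | simp [hp.ne', hp2.ne']

theorem ncard_setOf_pow_sq_add_mul_pow_eq_zero {A : k} (hA : A ≠ 0) :
    {x : k | x ^ p ^ 2 + A * x ^ p = 0}.ncard = p := by
  have hp := (Fact.out : p.Prime).ne_zero
  obtain ⟨a, rfl⟩ := IsAlgClosed.exists_pow_nat_eq A (Nat.pos_of_ne_zero hp)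
  have hfrob (x : k) : x ^ p ^ 2 + a ^ p * x ^ p = (x ^ p + a * x) ^ p := by
    rw [add_pow_char, ← pow_mul, ← sq, mul_pow]
  simp only [hfrob, pow_eq_zero_iff hp]
  exact ncard_setOf_pow_add_mul_eq_zero (ne_zero_pow hp hA)

end AdditivePolynomial

section AdditiveSystem

variable {k : Type*} [Field k] {p : ℕ} [ExpChar k p]

theorem additive_system_elim (h₁ h₂ h₃ h₄ : k) {c₁ c₂ : k} (hc : h₄ * c₁ = c₂ ^ p + c₂ * h₃) :
    h₄ ^ p * (c₁ ^ p + c₂ * h₁ - c₁ * h₂) =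
      c₂ ^ p ^ 2 + (h₃ ^ p - h₂ * h₄ ^ (p - 1)) * c₂ ^ p +
        (h₁ * h₄ - h₂ * h₃) * h₄ ^ (p - 1) * c₂ := by
  have hfrob : h₄ ^ p * c₁ ^ p = c₂ ^ p ^ 2 + h₃ ^ p * c₂ ^ p := by
    rw [← mul_pow, hc, add_pow_expChar, ← pow_mul, ← sq, mul_pow, mul_comm]
  have hp : h₄ ^ p = h₄ ^ (p - 1) * h₄ := by
    rw [← pow_succ, Nat.sub_add_cancel (expChar_pos k p)]
  linear_combination hfrob - h₄ ^ (p - 1) * h₂ * hc + (h₁ * c₂ - h₂ * c₁) * hp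

theorem setOf_additive_system_eq_image (h₁ h₂ h₃ : k) {h₄ : k} (hh₄ : h₄ ≠ 0) :
    {c : k × k | c.1 ^ p + c.2 * h₁ - c.1 * h₂ = 0 ∧ c.2 ^ p + c.2 * h₃ - c.1 * h₄ = 0} =
      (fun x => ((x ^ p + x * h₃) / h₄, x)) ''
        {x | x ^ p ^ 2 + (h₃ ^ p - h₂ * h₄ ^ (p - 1)) * x ^ p +
          (h₁ * h₄ - h₂ * h₃) * h₄ ^ (p - 1) * x = 0} := by
  ext ⟨c₁, c₂⟩
  simp only [Set.mem_ofPred_eq, Set.mem_image, Prod.mk.injEq]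
  constructor
  · rintro ⟨he₁, he₂⟩
    have hc : h₄ * c₁ = c₂ ^ p + c₂ * h₃ := by linear_combination -he₂
    refine ⟨c₂, ?_, by rw [← hc, mul_div_cancel_left₀ _ hh₄], rfl⟩
    rw [← additive_system_elim h₁ h₂ h₃ h₄ hc, he₁, mul_zero]
  · rintro ⟨x, hx, rfl, rfl⟩
    have hc : h₄ * ((x ^ p + x * h₃) / h₄) = x ^ p + x * h₃ := mul_div_cancel₀ _ hh₄
    refine ⟨?_, by linear_combination -hc⟩
    have := additive_system_elim h₁ h₂ h₃ h₄ hc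
    rw [hx] at this
    exact (mul_eq_zero.mp this).resolve_left (pow_ne_zero _ hh₄)

end AdditiveSystem

/-- Over an algebraically closed field of characteristic `p`, with `h₄ ≠ 0`, the number
of solutions of the additive system `c₁^p + c₂h₁ − c₁h₂ = 0`, `c₂^p + c₂h₃ − c₁h₄ = 0`
is `p²` if `h₁h₄ − h₂h₃ ≠ 0`; `p` if `h₁h₄ − h₂h₃ = 0` but `h₃^p − h₂h₄^{p-1} ≠ 0`;
and `1` if both vanish. -/
theorem additive_system_count {k : Type*} [Field k] [IsAlgClosed k] {p : ℕ} (hp : p.Prime)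
    [CharP k p] (h₁ h₂ h₃ h₄ : k) (hh₄ : h₄ ≠ 0) :
    (h₁ * h₄ - h₂ * h₃ ≠ 0 →
      {c : k × k | c.1 ^ p + c.2 * h₁ - c.1 * h₂ = 0 ∧
          c.2 ^ p + c.2 * h₃ - c.1 * h₄ = 0}.ncard = p ^ 2) ∧
    (h₁ * h₄ - h₂ * h₃ = 0 → h₃ ^ p - h₂ * h₄ ^ (p - 1) ≠ 0 →
      {c : k × k | c.1 ^ p + c.2 * h₁ - c.1 * h₂ = 0 ∧
          c.2 ^ p + c.2 * h₃ - c.1 * h₄ = 0}.ncard = p) ∧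
    (h₁ * h₄ - h₂ * h₃ = 0 → h₃ ^ p - h₂ * h₄ ^ (p - 1) = 0 →
      {c : k × k | c.1 ^ p + c.2 * h₁ - c.1 * h₂ = 0 ∧
          c.2 ^ p + c.2 * h₃ - c.1 * h₄ = 0}.ncard = 1) := by
  have : Fact p.Prime := ⟨hp⟩
  have hinj : Function.Injective fun x : k => ((x ^ p + x * h₃) / h₄, x) :=
    fun _ _ h => congrArg Prod.snd h
  refine ⟨fun hB => ?_, fun hB hA => ?_, fun hB hA => ?_⟩ <;>
    rw [setOf_additive_system_eq_image h₁ h₂ h₃ hh₄, Set.ncard_image_of_injective _ hinj]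
  · exact ncard_setOf_pow_sq_add_mul_eq_zero _ (mul_ne_zero hB (pow_ne_zero _ hh₄))
  · simpa [hB] using ncard_setOf_pow_sq_add_mul_pow_eq_zero hA
  · simp [hB, hA, pow_eq_zero_iff, hp.ne_zero]
end
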